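/- arXiv:2211.01654 — 10 statements merged into one kernel-verified Lean document; each statement's English description precedes it below -/
import Mathlib

section
/- For a connected finite weighted graph, the dual Cheeger constant h̄ = max over pairs of nonempty disjoint subsets V1, V2 of V of 2·b(V1,V2)/(b(V1)+b(V2)) satisfies h̄ ≤ 1, with equality if and only if the graph is bipartite. -/
/-!
Writing `b(A, B)` for the cut and `b(A)` for the volume, nonnegativity gives `b(V₁, V₂) ≤ b(V₁)`
and, by symmetry, `b(V₁, V₂) ≤ b(V₂)`, so every ratio `2 b(V₁, V₂) / (b(V₁) + b(V₂))` is at most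
`1`. Equality forces both inequalities to be equalities, i.e. every edge leaving `V₁` ends in `V₂`
and every edge leaving `V₂` ends in `V₁`; by connectivity `V₁ ∪ V₂` is then all of `V`, which is
a bipartition. Conversely, the two colour classes of a bipartition attain the value `1`.
-/

open Finset Relation

theorem Relation.ReflTransGen.mem_of_closed {α : Type*} {r : α → α → Prop} {x y : α}
    (h : ReflTransGen r x y) {s : Set α} (hs : ∀ u v, r u v → u ∈ s → v ∈ s) (hx : x ∈ s) :
    y ∈ s := by
  induction h with
  | refl => exact hx
  | tail _ hr ih => exact hs _ _ hr ih

namespace WeightedGraph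

variable {V F : Type*} {b : V → V → F}

section OrderedMonoid

variable [AddCommMonoid F]

def cut (b : V → V → F) (A B : Finset V) : F := ∑ x ∈ A, ∑ y ∈ B, b x y

theorem cut_comm (hsymm : ∀ x y, b x y = b y x) (A B : Finset V) : cut b A B = cut b B A := by
  rw [cut, cut, sum_comm]
  exact sum_congr rfl fun y _ => sum_congr rfl fun x _ => hsymm x y

theorem cut_nonneg [PartialOrder F] [IsOrderedAddMonoid F] (hnn : ∀ x y, 0 ≤ b x y)
    (A B : Finset V) : 0 ≤ cut b A B :=
  sum_nonneg fun x _ => sum_nonneg fun y _ => hnn x y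

variable [Fintype V]

def vol (b : V → V → F) (A : Finset V) : F := cut b A univ

theorem cut_le_vol [PartialOrder F] [IsOrderedAddMonoid F] (hnn : ∀ x y, 0 ≤ b x y)
    (A B : Finset V) : cut b A B ≤ vol b A :=
  sum_le_sum fun x _ => sum_le_sum_of_subset_of_nonneg (subset_univ B) fun y _ _ => hnn x y

variable [PartialOrder F] [IsOrderedCancelAddMonoid F]

theorem vol_pos (hiso : ∀ x, 0 < ∑ y, b x y) {A : Finset V} (hA : A.Nonempty) : 0 < vol b A :=
  sum_pos (fun x _ => hiso x) hA

theorem cut_eq_vol_iff (hnn : ∀ x y, 0 ≤ b x y) (A B : Finset V) :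
    cut b A B = vol b A ↔ ∀ x ∈ A, ∀ y, 0 < b x y → y ∈ B := by
  classical
  have hsplit : vol b A = cut b A B + cut b A Bᶜ := by
    simp only [vol, cut, ← sum_add_distrib, sum_add_sum_compl]
  rw [hsplit, left_eq_add, cut, sum_eq_zero_iff_of_nonneg fun x _ => sum_nonneg fun y _ => hnn x y]
  refine forall₂_congr fun x _ => ?_
  rw [sum_eq_zero_iff_of_nonneg fun y _ => hnn x y]
  refine forall_congr' fun y => ?_
  rw [mem_compl, (hnn x y).lt_iff_ne', not_imp_comm]

end OrderedMonoid

section OrderedField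

variable [Fintype V] [Field F] [LinearOrder F] [IsStrictOrderedRing F]

def cheegerRatio (b : V → V → F) (A B : Finset V) : F := 2 * cut b A B / (vol b A + vol b B)

theorem two_mul_cut_le (hsymm : ∀ x y, b x y = b y x) (hnn : ∀ x y, 0 ≤ b x y)
    (A B : Finset V) : 2 * cut b A B ≤ vol b A + vol b B := by
  have hB := cut_le_vol hnn B A
  rw [cut_comm hsymm] at hB
  linarith [cut_le_vol hnn A B]

theorem cheegerRatio_le_one (hsymm : ∀ x y, b x y = b y x) (hnn : ∀ x y, 0 ≤ b x y)
    (A B : Finset V) : cheegerRatio b A B ≤ 1 := by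
  have h := two_mul_cut_le hsymm hnn A B
  exact div_le_one_of_le₀ h (le_trans (by linarith [cut_nonneg hnn A B]) h)

theorem cheegerRatio_eq_one_iff (hsymm : ∀ x y, b x y = b y x) (hnn : ∀ x y, 0 ≤ b x y)
    {A B : Finset V} (hpos : vol b A + vol b B ≠ 0) :
    cheegerRatio b A B = 1 ↔ cut b A B = vol b A ∧ cut b B A = vol b B := by
  have hA := cut_le_vol hnn A B
  have hB := cut_le_vol hnn B A
  rw [cut_comm hsymm B A] at hB ⊢
  rw [cheegerRatio, div_eq_one_iff_eq hpos]
  constructor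
  · intro h
    constructor <;> linarith
  · rintro ⟨h₁, h₂⟩
    linarith

end OrderedField

section Coloring

variable [Fintype V]

def colorClass (P : V → Bool) (c : Bool) : Finset V := univ.filter (P · = c)

theorem disjoint_colorClass (P : V → Bool) (c : Bool) :
    Disjoint (colorClass P c) (colorClass P (!c)) :=
  disjoint_filter.2 fun x _ h₁ h₂ => by simp_all

theorem colorClass_nonempty [Zero F] [LT F] {P : V → Bool} (hP : ∀ x y, 0 < b x y → P x ≠ P y)
    {x y : V} (hxy : 0 < b x y) (c : Bool) : (colorClass P c).Nonempty := by
  by_cases hx : P x = c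
  · exact ⟨x, by simpa [colorClass]⟩
  · refine ⟨y, ?_⟩
    simp only [colorClass, mem_filter, mem_univ, true_and]
    rw [Bool.eq_not_of_ne (hP x y hxy).symm, Bool.eq_not_of_ne hx, Bool.not_not]

variable [AddCommMonoid F] [PartialOrder F] [IsOrderedCancelAddMonoid F]

theorem cut_colorClass_eq_vol (hnn : ∀ x y, 0 ≤ b x y) {P : V → Bool}
    (hP : ∀ x y, 0 < b x y → P x ≠ P y) (c : Bool) :
    cut b (colorClass P c) (colorClass P (!c)) = vol b (colorClass P c) := by
  rw [cut_eq_vol_iff hnn]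
  intro x hx y hxy
  simp only [colorClass, mem_filter, mem_univ, true_and] at hx ⊢
  exact hx ▸ Bool.eq_not_of_ne (hP x y hxy).symm

theorem exists_coloring_of_cut_eq_vol (hnn : ∀ x y, 0 ≤ b x y)
    (hconn : ∀ x y : V, ReflTransGen (fun u v => 0 < b u v) x y)
    {A B : Finset V} (hAB : Disjoint A B) (hA : A.Nonempty)
    (hcutA : cut b A B = vol b A) (hcutB : cut b B A = vol b B) :
    ∃ P : V → Bool, ∀ x y, 0 < b x y → P x ≠ P y := by
  classical
  rw [cut_eq_vol_iff hnn] at hcutA hcutB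
  obtain ⟨x₀, hx₀⟩ := hA
  have hcover (z : V) : z ∈ A ∨ z ∈ B :=
    (hconn x₀ z).mem_of_closed (s := {z | z ∈ A ∨ z ∈ B})
      (fun x y hxy hx => hx.elim (fun hx => .inr (hcutA x hx y hxy))
        (fun hx => .inl (hcutB x hx y hxy)))
      (.inl hx₀)
  refine ⟨fun x => decide (x ∈ A), fun x y hxy => ?_⟩
  rcases hcover x with hx | hx
  · simp [hx, disjoint_right.1 hAB (hcutA x hx y hxy)]
  · simp [disjoint_right.1 hAB hx, hcutB x hx y hxy]

end Coloring

end WeightedGraph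

open WeightedGraph

theorem dual_cheeger_le_one_iff_bipartite_general
    {V : Type*} [Fintype V] {F : Type*} [Field F] [LinearOrder F] [IsStrictOrderedRing F]
    (b : V → V → F)
    (hsymm : ∀ x y, b x y = b y x)
    (hnn : ∀ x y, 0 ≤ b x y)
    (hiso : ∀ x, 0 < ∑ y, b x y)
    (hconn : ∀ x y : V, Relation.ReflTransGen (fun u v => 0 < b u v) x y)
    (hbar : F)
    (hmax : IsGreatest {r : F | ∃ V1 V2 : Finset V, V1.Nonempty ∧ V2.Nonempty ∧
      Disjoint V1 V2 ∧
      r = 2 * (∑ x ∈ V1, ∑ y ∈ V2, b x y) /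
        ((∑ x ∈ V1, ∑ y, b x y) + (∑ x ∈ V2, ∑ y, b x y))} hbar) :
    hbar ≤ 1 ∧
      (hbar = 1 ↔ ∃ P : V → Bool, ∀ x y, 0 < b x y → P x ≠ P y) := by
  -- `cheegerRatio`, `cut` and `vol` unfold to the sums of the statement
  obtain ⟨A, B, hA, hB, hAB, rfl⟩ := hmax.1
  have hle : cheegerRatio b A B ≤ 1 := cheegerRatio_le_one hsymm hnn A B
  refine ⟨hle, fun h => ?_, fun ⟨P, hP⟩ => ?_⟩
  · have hpos := (add_pos (vol_pos hiso hA) (vol_pos hiso hB)).ne'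
    obtain ⟨hcutA, hcutB⟩ := (cheegerRatio_eq_one_iff hsymm hnn hpos).1 h
    exact exists_coloring_of_cut_eq_vol hnn hconn hAB hA hcutA hcutB
  · obtain ⟨x, -⟩ := hA
    obtain ⟨y, -, hxy⟩ :=
      exists_lt_of_sum_lt (s := univ) (f := 0) (g := b x) (by simpa using hiso x)
    have hne := colorClass_nonempty hP hxy
    have hpos := (add_pos (vol_pos hiso (hne true)) (vol_pos hiso (hne false))).ne'
    have hone : cheegerRatio b (colorClass P true) (colorClass P false) = 1 :=
      (cheegerRatio_eq_one_iff hsymm hnn hpos).2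
        ⟨cut_colorClass_eq_vol hnn hP true, cut_colorClass_eq_vol hnn hP false⟩
    exact le_antisymm hle
      (hmax.2 ⟨_, _, hne true, hne false, disjoint_colorClass P true, hone.symm⟩)

theorem dual_cheeger_le_one_iff_bipartite
    {V : Type*} [Fintype V] [DecidableEq V] {F : Type*} [Field F] [LinearOrder F] [IsStrictOrderedRing F]
    (b : V → V → F)
    (hsymm : ∀ x y, b x y = b y x)
    (hnn : ∀ x y, 0 ≤ b x y)
    (hloop : ∀ x, b x x = 0)
    (hiso : ∀ x, 0 < ∑ y, b x y)
    (hconn : ∀ x y : V, Relation.ReflTransGen (fun u v => 0 < b u v) x y)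
    (hbar : F)
    (hmax : IsGreatest {r : F | ∃ V1 V2 : Finset V, V1.Nonempty ∧ V2.Nonempty ∧
      Disjoint V1 V2 ∧
      r = 2 * (∑ x ∈ V1, ∑ y ∈ V2, b x y) /
        ((∑ x ∈ V1, ∑ y, b x y) + (∑ x ∈ V2, ∑ y, b x y))} hbar) :
    hbar ≤ 1 ∧
      (hbar = 1 ↔ ∃ P : V → Bool, ∀ x y, 0 < b x y → P x ≠ P y) :=
  dual_cheeger_le_one_iff_bipartite_general b hsymm hnn hiso hconn hbar hmax
end

section
/- Let (V,b) be a finite weighted graph with N = 2K vertices (K ≥ 1), at least one edge, and no isolated vertices. Then the dual Cheeger constant satisfies h̄ ≥ N/(2(N−1)). -/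
/-!
Average the cut weight `b(S, Sᶜ)` over all `K`-element subsets `S`. An ordered pair `(x, y)` of
distinct vertices is cut (with `x ∈ S`, `y ∉ S`) by a fraction `K² / (N (N - 1))` of these subsets,
so some `S` has `b(S, Sᶜ) ≥ K² / (N (N - 1)) · b(V)`. The pair `(S, Sᶜ)` then witnesses
`h̄ ≥ 2 b(S, Sᶜ) / b(V) ≥ 2K² / (N (N - 1)) = N / (2 (N - 1))`.
-/

open Finset

theorem Nat.add_two_mul_add_one_mul_choose_eq (k l : ℕ) :
    (k + l + 2) * (k + l + 1) * (k + l).choose k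
      = (k + l + 2).choose (k + 1) * ((k + 1) * (l + 1)) := by
  have h := Nat.choose_mul_succ_eq (k + l) k
  rw [show k + l + 1 - k = l + 1 by omega] at h
  rw [mul_assoc, mul_comm (k + l + 1), h, ← mul_assoc, Nat.add_one_mul_choose_eq]
  ring

section Cut

variable {V : Type*} [Fintype V] [DecidableEq V]

theorem card_filter_powersetCard_mem_notMem {x y : V} (hxy : x ≠ y) (k : ℕ) :
    #{S ∈ powersetCard (k + 1) univ | x ∈ S ∧ y ∉ S} = (Fintype.card V - 2).choose k := by
  have hcard : #(univ \ {x, y}) = Fintype.card V - 2 := by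
    rw [card_sdiff_of_subset (subset_univ _), card_pair hxy, card_univ]
  rw [← hcard, ← card_powersetCard]
  have hx_notMem {T : Finset V} (hT : T ⊆ univ \ {x, y}) : x ∉ T := fun hx => by
    simpa using hT hx
  refine card_nbij' (·.erase x) (insert x) ?_ ?_ ?_ ?_ <;> intro S hS <;>
    simp only [coe_filter, mem_coe, mem_powersetCard, subset_univ, true_and,
      Set.mem_ofPred_eq] at hS ⊢
  · obtain ⟨hSk, hxS, hyS⟩ := hS
    refine ⟨fun z hz => ?_, by rw [card_erase_of_mem hxS, hSk, Nat.add_sub_cancel]⟩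
    grind
  · obtain ⟨hS, hSk⟩ := hS
    refine ⟨by rw [card_insert_of_notMem (hx_notMem hS), hSk], mem_insert_self x S, ?_⟩
    grind
  · exact insert_erase hS.2.1
  · exact erase_insert (hx_notMem hS.1)

def cutWeight {M : Type*} [AddCommMonoid M] (b : V → V → M) (S : Finset V) : M :=
  ∑ x ∈ S, ∑ y ∈ Sᶜ, b x y

theorem sum_powersetCard_cutWeight {M : Type*} [AddCommMonoid M] (b : V → V → M)
    (hloop : ∀ x, b x x = 0) (k : ℕ) :
    ∑ S ∈ powersetCard (k + 1) univ, cutWeight b S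
      = (Fintype.card V - 2).choose k • ∑ x, ∑ y, b x y := by
  have hcut (S : Finset V) :
      cutWeight b S = ∑ x, ∑ y, if x ∈ S ∧ y ∉ S then b x y else 0 := by
    simp [cutWeight, ite_and, sum_ite_mem, ← mem_compl]
  simp only [hcut, smul_sum]
  rw [sum_comm]
  refine sum_congr rfl fun x _ => ?_
  rw [sum_comm]
  refine sum_congr rfl fun y _ => ?_
  rw [← sum_filter, sum_const]
  obtain rfl | hxy := eq_or_ne x y
  · simp [hloop]
  · rw [card_filter_powersetCard_mem_notMem hxy]

theorem exists_card_eq_mul_sum_le_mul_cutWeight {F : Type*} [CommRing F] [LinearOrder F]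
    [IsStrictOrderedRing F] (b : V → V → F) (hloop : ∀ x, b x x = 0) {k l : ℕ}
    (hcard : Fintype.card V = k + l + 2) :
    ∃ S : Finset V, #S = k + 1 ∧
      ((k + 1) * (l + 1) : F) * ∑ x, ∑ y, b x y ≤ ((k + l + 2) * (k + l + 1) : F) * cutWeight b S := by
  have hne : (powersetCard (k + 1) (univ : Finset V)).Nonempty :=
    powersetCard_nonempty.2 (by rw [card_univ]; omega)
  obtain ⟨S, hS, hmax⟩ := exists_max_image _ (cutWeight b) hne
  refine ⟨S, (mem_powersetCard.1 hS).2, ?_⟩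
  have hsum := sum_le_card_nsmul _ _ _ hmax
  rw [sum_powersetCard_cutWeight b hloop, card_powersetCard, card_univ, hcard,
    show k + l + 2 - 2 = k + l by omega, nsmul_eq_mul, nsmul_eq_mul] at hsum
  have hchoose : (((k + l + 2) * (k + l + 1) * (k + l).choose k : ℕ) : F)
      = (((k + l + 2).choose (k + 1) * ((k + 1) * (l + 1)) : ℕ) : F) := by
    rw [Nat.add_two_mul_add_one_mul_choose_eq]
  push_cast at hchoose
  have hpos : (0 : F) < (k + l + 2).choose (k + 1) := by
    exact_mod_cast Nat.choose_pos (by omega)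
  refine le_of_mul_le_mul_left ?_ hpos
  calc ((k + l + 2).choose (k + 1) : F) * ((k + 1) * (l + 1) * ∑ x, ∑ y, b x y)
      = (k + l + 2) * (k + l + 1) * ((k + l).choose k * ∑ x, ∑ y, b x y) := by
        linear_combination (∑ x, ∑ y, b x y) * hchoose.symm
    _ ≤ (k + l + 2) * (k + l + 1) * ((k + l + 2).choose (k + 1) * cutWeight b S) := by
        gcongr
    _ = _ := by ring

end Cut

theorem dual_cheeger_lower_bound_even_general
    {V : Type*} [Fintype V] {F : Type*} [Field F] [LinearOrder F] [IsStrictOrderedRing F]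
    (b : V → V → F)
    (hloop : ∀ x, b x x = 0)
    (hiso : ∀ x, 0 < ∑ y, b x y)
    (K N : ℕ) (hK : 1 ≤ K) (hN : N = 2 * K)
    (hcard : Fintype.card V = N)
    (hbar : F)
    (hmax : IsGreatest {r : F | ∃ V1 V2 : Finset V, V1.Nonempty ∧ V2.Nonempty ∧
      Disjoint V1 V2 ∧
      r = 2 * (∑ x ∈ V1, ∑ y ∈ V2, b x y) /
        ((∑ x ∈ V1, ∑ y, b x y) + (∑ x ∈ V2, ∑ y, b x y))} hbar) :
    (N : F) / (2 * ((N : F) - 1)) ≤ hbar := by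
  classical
  obtain ⟨m, rfl⟩ : ∃ m, K = m + 1 := ⟨K - 1, by omega⟩
  obtain ⟨S, hS, hkey⟩ :=
    exists_card_eq_mul_sum_le_mul_cutWeight b hloop (k := m) (l := m) (by rw [hcard, hN]; ring)
  have hSne : S.Nonempty := card_pos.1 (by omega)
  have hScne : Sᶜ.Nonempty := card_pos.1 (by rw [card_compl, hS, hcard]; omega)
  have hvol : 0 < ∑ x, ∑ y, b x y := sum_pos (fun x _ => hiso x) (hSne.mono (subset_univ S))
  refine le_trans ?_ (hmax.2 ⟨S, Sᶜ, hSne, hScne, disjoint_compl_right, rfl⟩)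
  rw [sum_add_sum_compl, hN, div_le_div_iff₀ (by push_cast; linarith) hvol]
  push_cast
  change _ ≤ 2 * cutWeight b S * _
  have : (0 : F) < m + 1 := by positivity
  nlinarith

theorem dual_cheeger_lower_bound_even
    {V : Type*} [Fintype V] [DecidableEq V] {F : Type*} [Field F] [LinearOrder F] [IsStrictOrderedRing F]
    (b : V → V → F)
    (hsymm : ∀ x y, b x y = b y x)
    (hnn : ∀ x y, 0 ≤ b x y)
    (hloop : ∀ x, b x x = 0)
    (hiso : ∀ x, 0 < ∑ y, b x y)
    (K N : ℕ) (hK : 1 ≤ K) (hN : N = 2 * K)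
    (hcard : Fintype.card V = N)
    (hedge : ∃ x y, 0 < b x y)
    (hbar : F)
    (hmax : IsGreatest {r : F | ∃ V1 V2 : Finset V, V1.Nonempty ∧ V2.Nonempty ∧
      Disjoint V1 V2 ∧
      r = 2 * (∑ x ∈ V1, ∑ y ∈ V2, b x y) /
        ((∑ x ∈ V1, ∑ y, b x y) + (∑ x ∈ V2, ∑ y, b x y))} hbar) :
    (N : F) / (2 * ((N : F) - 1)) ≤ hbar :=
  dual_cheeger_lower_bound_even_general b hloop hiso K N hK hN hcard hbar hmax
end

section
/- Let (V,b) be a finite weighted graph with N = 2K+1 vertices (K ≥ 1), at least one edge, and no isolated vertices. Then the dual Cheeger constant satisfies h̄ ≥ (N+1)/(2N). -/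
/-! Average the cut weight `b(A, Aᶜ)` over all `K`-subsets `A`. An ordered pair `x ≠ y` is cut
(`x ∈ A`, `y ∉ A`) by exactly `C(N-2, K-1)` of the `C(N, K)` subsets, so the average is
`C(N-2, K-1) / C(N, K) · b(V) = (N+1)/(4N) · b(V)` when `N = 2K+1`. Some `A` is at least
average, and the pair `(A, Aᶜ)` gives `h̄ ≥ 2 b(A, Aᶜ) / b(V) ≥ (N+1)/(2N)`. -/

open Finset

section Counting

variable {V : Type*} [Fintype V] [DecidableEq V]

lemma card_powersetCard_filter_mem_notMem {x y : V} (hxy : x ≠ y) (k : ℕ) :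
    #{A ∈ powersetCard (k + 1) (univ : Finset V) | x ∈ A ∧ y ∉ A}
      = (Fintype.card V - 2).choose k := by
  rw [← card_pair hxy, ← card_compl, ← card_powersetCard]
  refine card_bij' (fun A _ => A.erase x) (fun B _ => insert x B) ?_ ?_ ?_ ?_
  · intro A hA
    simp only [mem_filter, mem_powersetCard, subset_univ, true_and] at hA ⊢
    refine ⟨fun z hz => ?_, by rw [card_erase_of_mem hA.2.1, hA.1]; rfl⟩
    grind [mem_compl]
  · intro B hB
    simp only [mem_filter, mem_powersetCard, subset_univ, true_and] at hB ⊢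
    have hxB : x ∉ B := fun h => by simpa using hB.1 h
    have hyB : y ∉ B := fun h => by simpa using hB.1 h
    grind
  · intro A hA
    exact insert_erase (mem_filter.mp hA).2.1
  · intro B hB
    exact erase_insert fun h => by simpa using (mem_powersetCard.mp hB).1 h

lemma sum_sum_compl_eq_sum_card_nsmul {M : Type*} [AddCommMonoid M] (b : V → V → M)
    (P : Finset (Finset V)) :
    ∑ A ∈ P, ∑ x ∈ A, ∑ y ∈ Aᶜ, b x y = ∑ x, ∑ y, #{A ∈ P | x ∈ A ∧ y ∉ A} • b x y := by
  have indicator (A : Finset V) :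
      ∑ x ∈ A, ∑ y ∈ Aᶜ, b x y = ∑ x, ∑ y, if x ∈ A ∧ y ∉ A then b x y else 0 := by
    simp only [ite_and, sum_ite_irrel, sum_const_zero, ← mem_compl, sum_ite_mem, univ_inter]
  simp only [indicator, card_eq_sum_ones, sum_filter, sum_smul, ite_smul, one_smul, zero_smul]
  rw [sum_comm]
  exact sum_congr rfl fun x _ => sum_comm

lemma sum_powersetCard_sum_sum_compl {M : Type*} [AddCommMonoid M] (b : V → V → M)
    (hloop : ∀ x, b x x = 0) (k : ℕ) :
    ∑ A ∈ powersetCard (k + 1) univ, ∑ x ∈ A, ∑ y ∈ Aᶜ, b x y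
      = (Fintype.card V - 2).choose k • ∑ x, ∑ y, b x y := by
  rw [sum_sum_compl_eq_sum_card_nsmul, smul_sum]
  refine sum_congr rfl fun x _ => ?_
  rw [smul_sum]
  refine sum_congr rfl fun y _ => ?_
  obtain rfl | hxy := eq_or_ne x y
  · simp [hloop]
  · rw [card_powersetCard_filter_mem_notMem hxy]

lemma exists_card_eq_choose_nsmul_le_choose_nsmul_sum_sum_compl {M : Type*} [AddCommMonoid M]
    [LinearOrder M] [IsOrderedCancelAddMonoid M] (b : V → V → M) (hloop : ∀ x, b x x = 0)
    {k : ℕ} (hk : k + 1 ≤ Fintype.card V) :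
    ∃ A : Finset V, #A = k + 1 ∧ (Fintype.card V - 2).choose k • ∑ x, ∑ y, b x y
      ≤ (Fintype.card V).choose (k + 1) • ∑ x ∈ A, ∑ y ∈ Aᶜ, b x y := by
  set P := powersetCard (k + 1) (univ : Finset V)
  have hne : P.Nonempty := by rwa [powersetCard_nonempty, card_univ]
  have hsums : ∑ _A ∈ P, (Fintype.card V - 2).choose k • ∑ x, ∑ y, b x y
      = ∑ A ∈ P, (Fintype.card V).choose (k + 1) • ∑ x ∈ A, ∑ y ∈ Aᶜ, b x y := by
    rw [sum_const, ← smul_sum, sum_powersetCard_sum_sum_compl b hloop, card_powersetCard,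
      card_univ, smul_comm]
  obtain ⟨A, hA, hle⟩ := exists_le_of_sum_le hne hsums.le
  exact ⟨A, (mem_powersetCard.mp hA).2, hle⟩

end Counting

lemma Nat.two_mul_add_four_mul_choose_eq (k : ℕ) :
    (2 * k + 4) * (2 * k + 3).choose (k + 1) = 4 * (2 * k + 3) * (2 * k + 1).choose k := by
  have h1 := Nat.add_one_mul_choose_eq (2 * k + 1) k
  have h2 := Nat.choose_succ_right_eq (2 * k + 2) k
  have h3 := Nat.add_one_mul_choose_eq (2 * k + 2) k
  rw [show 2 * k + 2 - k = k + 2 by omega] at h2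
  refine Nat.eq_of_mul_eq_mul_right (show 0 < (k + 1) * (k + 2) by positivity) ?_
  grind

theorem dual_cheeger_lower_bound_odd_general
    {V : Type*} [Fintype V] [DecidableEq V] {F : Type*} [Field F] [LinearOrder F] [IsStrictOrderedRing F]
    (b : V → V → F)
    (hloop : ∀ x, b x x = 0)
    (hiso : ∀ x, 0 < ∑ y, b x y)
    (K N : ℕ) (hK : 1 ≤ K) (hN : N = 2 * K + 1)
    (hcard : Fintype.card V = N)
    (hbar : F)
    (hmax : IsGreatest {r : F | ∃ V1 V2 : Finset V, V1.Nonempty ∧ V2.Nonempty ∧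
      Disjoint V1 V2 ∧
      r = 2 * (∑ x ∈ V1, ∑ y ∈ V2, b x y) /
        ((∑ x ∈ V1, ∑ y, b x y) + (∑ x ∈ V2, ∑ y, b x y))} hbar) :
    ((N : F) + 1) / (2 * (N : F)) ≤ hbar := by
  obtain ⟨k, rfl⟩ : ∃ k, K = k + 1 := ⟨K - 1, by omega⟩
  have : Nonempty V := Fintype.card_pos_iff.mp (by omega)
  set S := ∑ x, ∑ y, b x y
  have hS : 0 < S := sum_pos (fun x _ => hiso x) univ_nonempty
  obtain ⟨A, hA, hcut⟩ :=
    exists_card_eq_choose_nsmul_le_choose_nsmul_sum_sum_compl b hloop (k := k) (by omega)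
  set cut := ∑ x ∈ A, ∑ y ∈ Aᶜ, b x y
  have hA_le : 2 * cut / S ≤ hbar := by
    have hA_ne : A.Nonempty := card_pos.mp (by omega)
    have hAc_ne : Aᶜ.Nonempty := card_pos.mp (by rw [card_compl]; omega)
    simpa only [sum_add_sum_compl] using hmax.2 ⟨A, Aᶜ, hA_ne, hAc_ne, disjoint_compl_right, rfl⟩
  rw [hcard, nsmul_eq_mul, nsmul_eq_mul] at hcut
  have hchoose : ((N : F) + 1) * (N.choose (k + 1) : ℕ) = 4 * N * ((N - 2).choose k : ℕ) := by
    have h := Nat.two_mul_add_four_mul_choose_eq k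
    rw [show 2 * k + 1 = N - 2 by omega, show 2 * k + 3 = N by omega,
      show 2 * k + 4 = N + 1 by omega] at h
    exact_mod_cast h
  have hC : (0 : F) < (N.choose (k + 1) : ℕ) := by exact_mod_cast Nat.choose_pos (by omega)
  have hN_pos : (0 : F) < N := by exact_mod_cast (show 0 < N by omega)
  refine hA_le.trans' ((div_le_div_iff₀ (by positivity) hS).mpr (le_of_mul_le_mul_right ?_ hC))
  calc ((N : F) + 1) * S * (N.choose (k + 1) : ℕ) = 4 * N * (((N - 2).choose k : ℕ) * S) := by
        linear_combination S * hchoose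
    _ ≤ 4 * N * ((N.choose (k + 1) : ℕ) * cut) := by gcongr
    _ = 2 * cut * (2 * N) * (N.choose (k + 1) : ℕ) := by ring

theorem dual_cheeger_lower_bound_odd
    {V : Type*} [Fintype V] [DecidableEq V] {F : Type*} [Field F] [LinearOrder F] [IsStrictOrderedRing F]
    (b : V → V → F)
    (hsymm : ∀ x y, b x y = b y x)
    (hnn : ∀ x y, 0 ≤ b x y)
    (hloop : ∀ x, b x x = 0)
    (hiso : ∀ x, 0 < ∑ y, b x y)
    (K N : ℕ) (hK : 1 ≤ K) (hN : N = 2 * K + 1)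
    (hcard : Fintype.card V = N)
    (hedge : ∃ x y, 0 < b x y)
    (hbar : F)
    (hmax : IsGreatest {r : F | ∃ V1 V2 : Finset V, V1.Nonempty ∧ V2.Nonempty ∧
      Disjoint V1 V2 ∧
      r = 2 * (∑ x ∈ V1, ∑ y ∈ V2, b x y) /
        ((∑ x ∈ V1, ∑ y, b x y) + (∑ x ∈ V2, ∑ y, b x y))} hbar) :
    ((N : F) + 1) / (2 * (N : F)) ≤ hbar :=
  dual_cheeger_lower_bound_odd_general b hloop hiso K N hK hN hcard hbar hmax
end

section
/- Let (V,b) be a finite weighted graph with no isolated vertices and f : V → K with V_f⁺ = {x : f(x) > 0} nonempty and V \ V_f⁺ nonempty. Let h(f) = min over nonempty S ⊆ V_f⁺ of b(S, V∖S)/b(S), and let f₊(x) = max(f(x), 0). Then 1 − √(1 − h(f)²) ≤ ⟨L f₊, f₊⟩/⟨f₊, f₊⟩ ≤ 1 + √(1 − h(f)²). -/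
open Finset

private lemma telescope_aux (u : ℕ → ℝ) {a n : ℕ} (h : a ≤ n) :
    ∑ k ∈ Finset.Ico a n, (u k - u (k+1)) = u a - u n := by
  rw [Finset.sum_Ico_eq_sub _ h, Finset.sum_range_sub' u, Finset.sum_range_sub' u]
  ring

theorem cheeger_lemma_positive_part
    {V : Type*} [Fintype V] [DecidableEq V]
    (b : V → V → ℝ)
    (hsymm : ∀ x y, b x y = b y x)
    (hnn : ∀ x y, 0 ≤ b x y)
    (hloop : ∀ x, b x x = 0)
    (hiso : ∀ x, 0 < ∑ y, b x y)
    (f : V → ℝ)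
    (hpos : ∃ x, 0 < f x) (hnotall : ∃ x, ¬ 0 < f x)
    (hf : ℝ)
    (hmin : IsLeast {r : ℝ | ∃ S : Finset V, S.Nonempty ∧ (∀ x ∈ S, 0 < f x) ∧
      r = (∑ x ∈ S, ∑ y ∈ Sᶜ, b x y) / (∑ x ∈ S, ∑ y, b x y)} hf) :
    1 - Real.sqrt (1 - hf ^ 2)
      ≤ (∑ x, (∑ y, (max (f x) 0 - max (f y) 0) * (b x y / (∑ z, b x z)))
            * max (f x) 0 * (∑ y, b x y)) /
        (∑ x, max (f x) 0 ^ 2 * (∑ y, b x y)) ∧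
    (∑ x, (∑ y, (max (f x) 0 - max (f y) 0) * (b x y / (∑ z, b x z)))
          * max (f x) 0 * (∑ y, b x y)) /
        (∑ x, max (f x) 0 ^ 2 * (∑ y, b x y))
      ≤ 1 + Real.sqrt (1 - hf ^ 2) := by
  classical
  set g : V → ℝ := fun x => max (f x) 0 with hgdef
  set d : V → ℝ := fun x => ∑ y, b x y with hddef
  have hgx : ∀ x, max (f x) 0 = g x := fun _ => rfl
  have hdx : ∀ x, (∑ y, b x y) = d x := fun _ => rfl
  have hdz : ∀ x, (∑ z, b x z) = d x := fun _ => rfl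
  simp only [hgx, hdx, hdz]
  have hdpos : ∀ x, 0 < d x := hiso
  have hgnn : ∀ x, 0 ≤ g x := fun x => le_max_right _ _
  set D : ℝ := ∑ x, g x ^ 2 * d x with hDdef
  set W : ℝ := ∑ x, ∑ y, g x * g y * b x y with hWdef
  have hDpos : 0 < D := by
    obtain ⟨x0, hx0⟩ := hpos
    have hg0 : 0 < g x0 := lt_max_of_lt_left hx0
    have hd0 := hdpos x0
    refine Finset.sum_pos' (fun x _ => by have := hgnn x; have := (hdpos x).le; positivity)
      ⟨x0, Finset.mem_univ _, by positivity⟩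
  have hWnn : 0 ≤ W := by
    refine Finset.sum_nonneg fun x _ => Finset.sum_nonneg fun y _ => ?_
    have := hgnn x; have := hgnn y; have := hnn x y; positivity
  -- numerator = D - W
  have hnum : (∑ x, (∑ y, (g x - g y) * (b x y / d x)) * g x * d x) = D - W := by
    have h1 : ∀ x, (∑ y, (g x - g y) * (b x y / d x)) * g x * d x
        = ∑ y, (g x ^ 2 * b x y - g x * g y * b x y) := by
      intro x
      rw [Finset.sum_mul, Finset.sum_mul]
      refine Finset.sum_congr rfl fun y _ => ?_
      have hdne : d x ≠ 0 := (hdpos x).ne'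
      field_simp
    rw [Finset.sum_congr rfl fun x _ => h1 x, hDdef, hWdef, ← Finset.sum_sub_distrib]
    refine Finset.sum_congr rfl fun x _ => ?_
    rw [Finset.sum_sub_distrib, ← Finset.mul_sum]
  rw [hnum]
  have hcol : ∀ y, (∑ x, b x y) = d y := by
    intro y
    rw [hddef]
    exact Finset.sum_congr rfl fun x _ => hsymm x y
  have hsum1 : (∑ x, ∑ y, g x ^ 2 * b x y) = D := by
    refine Finset.sum_congr rfl fun x _ => ?_
    rw [← Finset.mul_sum]
  have hsum2 : (∑ x, ∑ y, g y ^ 2 * b x y) = D := by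
    rw [Finset.sum_comm]
    refine Finset.sum_congr rfl fun y _ => ?_
    rw [← Finset.mul_sum, hcol y]
  -- Dirichlet sums
  have hA : (∑ x, ∑ y, (g x - g y) ^ 2 * b x y) = 2 * D - 2 * W := by
    have : ∀ x, (∑ y, (g x - g y) ^ 2 * b x y)
        = (∑ y, g x ^ 2 * b x y) + (∑ y, g y ^ 2 * b x y)
          - 2 * ∑ y, g x * g y * b x y := by
      intro x
      rw [Finset.mul_sum, ← Finset.sum_add_distrib, ← Finset.sum_sub_distrib]
      exact Finset.sum_congr rfl fun y _ => by ring
    rw [Finset.sum_congr rfl fun x _ => this x, Finset.sum_sub_distrib,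
      Finset.sum_add_distrib, hsum1, hsum2, ← Finset.mul_sum, ← hWdef]
    ring
  have hB : (∑ x, ∑ y, (g x + g y) ^ 2 * b x y) = 2 * D + 2 * W := by
    have : ∀ x, (∑ y, (g x + g y) ^ 2 * b x y)
        = (∑ y, g x ^ 2 * b x y) + (∑ y, g y ^ 2 * b x y)
          + 2 * ∑ y, g x * g y * b x y := by
      intro x
      rw [Finset.mul_sum, ← Finset.sum_add_distrib, ← Finset.sum_add_distrib]
      exact Finset.sum_congr rfl fun y _ => by ring
    rw [Finset.sum_congr rfl fun x _ => this x, Finset.sum_add_distrib,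
      Finset.sum_add_distrib, hsum1, hsum2, ← Finset.mul_sum, ← hWdef]
    ring
  set E : ℝ := ∑ x, ∑ y, |g x ^ 2 - g y ^ 2| * b x y with hEdef
  -- Cauchy–Schwarz
  have hCS : E ^ 2 ≤ (2 * D - 2 * W) * (2 * D + 2 * W) := by
    rw [← hA, ← hB]
    have key := Finset.sum_mul_sq_le_sq_mul_sq Finset.univ
      (fun p : V × V => |g p.1 - g p.2| * Real.sqrt (b p.1 p.2))
      (fun p : V × V => (g p.1 + g p.2) * Real.sqrt (b p.1 p.2))
    have e1 : (∑ p : V × V, (|g p.1 - g p.2| * Real.sqrt (b p.1 p.2))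
        * ((g p.1 + g p.2) * Real.sqrt (b p.1 p.2))) = E := by
      rw [hEdef, Fintype.sum_prod_type]
      refine Finset.sum_congr rfl fun x _ => Finset.sum_congr rfl fun y _ => ?_
      have h1 : Real.sqrt (b x y) * Real.sqrt (b x y) = b x y :=
        Real.mul_self_sqrt (hnn x y)
      have h2 : |g x ^ 2 - g y ^ 2| = |g x - g y| * (g x + g y) := by
        rw [← abs_of_nonneg (by have := hgnn x; have := hgnn y; positivity :
          (0:ℝ) ≤ g x + g y), ← abs_mul]
        congr 1; ring
      calc |g x - g y| * Real.sqrt (b x y) * ((g x + g y) * Real.sqrt (b x y))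
          = |g x - g y| * (g x + g y) * (Real.sqrt (b x y) * Real.sqrt (b x y)) := by ring
        _ = |g x ^ 2 - g y ^ 2| * b x y := by rw [h1, h2]
    have e2 : (∑ p : V × V, (|g p.1 - g p.2| * Real.sqrt (b p.1 p.2)) ^ 2)
        = ∑ x, ∑ y, (g x - g y) ^ 2 * b x y := by
      rw [Fintype.sum_prod_type]
      refine Finset.sum_congr rfl fun x _ => Finset.sum_congr rfl fun y _ => ?_
      rw [mul_pow, sq_abs, Real.sq_sqrt (hnn x y)]
    have e3 : (∑ p : V × V, ((g p.1 + g p.2) * Real.sqrt (b p.1 p.2)) ^ 2)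
        = ∑ x, ∑ y, (g x + g y) ^ 2 * b x y := by
      rw [Fintype.sum_prod_type]
      refine Finset.sum_congr rfl fun x _ => Finset.sum_congr rfl fun y _ => ?_
      rw [mul_pow, Real.sq_sqrt (hnn x y)]
    rw [e1, e2, e3] at key
    exact key
  -- ### sorted enumeration and coarea bound: 2 * hf * D ≤ E
  have hcoarea : 2 * (hf * D) ≤ E := by
    set n := Fintype.card V with hn
    obtain ⟨e, he⟩ : ∃ e : Fin n ≃ V, ∀ i j : Fin n, i ≤ j → g (e j) ≤ g (e i) := by
      let e0 : Fin n ≃ V := (Fintype.equivFin V).symm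
      let F : Fin n → ℝ := fun i => -(g (e0 i))
      refine ⟨((Tuple.sort F : Equiv.Perm (Fin n)) : Fin n ≃ Fin n).trans e0,
        fun i j hij => ?_⟩
      have h := Tuple.monotone_sort F hij
      simp only [Function.comp_apply, F] at h
      have h' := neg_le_neg_iff.mp h
      simpa [Equiv.trans_apply] using h'
    set u : ℕ → ℝ := fun k => if h : k < n then g (e ⟨k, h⟩) ^ 2 else 0 with hudef
    have hunn : ∀ k, 0 ≤ u k := by
      intro k
      by_cases h : k < n
      · simp only [hudef, dif_pos h]; exact sq_nonneg _
      · simp only [hudef, dif_neg h]; exact le_refl 0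
    have hustep : ∀ k, u (k + 1) ≤ u k := by
      intro k
      by_cases h1 : k + 1 < n
      · have h0 : k < n := Nat.lt_of_succ_lt h1
        simp only [hudef, dif_pos h1, dif_pos h0]
        exact pow_le_pow_left₀ (hgnn _)
          (he ⟨k, h0⟩ ⟨k + 1, h1⟩ (by simp [Fin.le_def])) 2
      · simp only [hudef, dif_neg h1]
        exact hunn k
    have huanti : Antitone u := antitone_nat_of_succ_le hustep
    have hun : u n = 0 := by simp [hudef]
    have huval : ∀ i : Fin n, u i.val = g (e i) ^ 2 := by
      intro i
      simp only [hudef, dif_pos i.isLt, Fin.eta]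
    set c : ℕ → ℝ := fun k => u k - u (k + 1) with hcdef
    have hcnn : ∀ k, 0 ≤ c k := fun k => sub_nonneg.mpr (hustep k)
    have hfin : ∀ i : Fin n,
        u i.val = ∑ k ∈ Finset.range n, (if i.val ≤ k then c k else 0) := by
      intro i
      rw [← Finset.sum_filter]
      have hfe : Finset.filter (fun k => i.val ≤ k) (Finset.range n)
          = Finset.Ico i.val n := by
        ext k
        simp only [Finset.mem_filter, Finset.mem_range, Finset.mem_Ico]
        omega
      rw [hfe, hcdef, telescope_aux u i.isLt.le, hun, sub_zero]
    set S : ℕ → Finset V :=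
      fun k => Finset.univ.filter (fun x => ((e.symm x : Fin n) : ℕ) ≤ k) with hSdef
    set vol : ℕ → ℝ := fun k => ∑ x ∈ S k, d x with hvoldef
    set cut : ℕ → ℝ := fun k => ∑ x ∈ S k, ∑ y ∈ (S k)ᶜ, b x y with hcutdef
    set B : Fin n → Fin n → ℝ := fun i j => b (e i) (e j) with hBdef
    -- Abel summation for D
    have hID1 : D = ∑ k ∈ Finset.range n, c k * vol k := by
      have h0 : D = ∑ i : Fin n, u i.val * d (e i) := by
        rw [hDdef, ← Equiv.sum_comp e (fun x => g x ^ 2 * d x)]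
        exact Finset.sum_congr rfl fun i _ => by rw [huval i]
      have h1 : ∀ i : Fin n, u i.val * d (e i)
          = ∑ k ∈ Finset.range n, (if i.val ≤ k then c k * d (e i) else 0) := by
        intro i
        rw [hfin i, Finset.sum_mul]
        exact Finset.sum_congr rfl fun k _ => by
          split <;> simp
      have h2 : ∀ k, vol k = ∑ i : Fin n, (if (i : ℕ) ≤ k then d (e i) else 0) := by
        intro k
        simp only [hvoldef, hSdef]
        rw [Finset.sum_filter,
          ← Equiv.sum_comp e (fun x => if ((e.symm x : Fin n) : ℕ) ≤ k then d x else 0)]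
        exact Finset.sum_congr rfl fun i _ => by rw [Equiv.symm_apply_apply]
      calc D = ∑ i : Fin n, u i.val * d (e i) := h0
        _ = ∑ i : Fin n, ∑ k ∈ Finset.range n,
            (if i.val ≤ k then c k * d (e i) else 0) :=
          Finset.sum_congr rfl fun i _ => h1 i
        _ = ∑ k ∈ Finset.range n, ∑ i : Fin n,
            (if i.val ≤ k then c k * d (e i) else 0) := Finset.sum_comm
        _ = ∑ k ∈ Finset.range n, c k * vol k := by
          refine Finset.sum_congr rfl fun k _ => ?_
          rw [h2 k, Finset.mul_sum]
          exact Finset.sum_congr rfl fun i _ => by split <;> simp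
    -- cut in sorted coordinates
    have hcutk : ∀ k, cut k = ∑ i : Fin n, ∑ j : Fin n,
        (if (i : ℕ) ≤ k ∧ k < (j : ℕ) then B i j else 0) := by
      intro k
      simp only [hcutdef, hSdef]
      rw [Finset.compl_filter, Finset.sum_filter,
        ← Equiv.sum_comp e (fun x => if ((e.symm x : Fin n) : ℕ) ≤ k then
          ∑ y ∈ Finset.filter (fun y => ¬ ((e.symm y : Fin n) : ℕ) ≤ k) Finset.univ, b x y
          else 0)]
      refine Finset.sum_congr rfl fun i _ => ?_
      rw [Equiv.symm_apply_apply]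
      by_cases hik : (i : ℕ) ≤ k
      · rw [if_pos hik, Finset.sum_filter,
          ← Equiv.sum_comp e
            (fun y => if ¬ ((e.symm y : Fin n) : ℕ) ≤ k then b (e i) y else 0)]
        refine Finset.sum_congr rfl fun j _ => ?_
        rw [Equiv.symm_apply_apply]
        have hiff : (¬ (j : ℕ) ≤ k) ↔ ((i : ℕ) ≤ k ∧ k < (j : ℕ)) := by
          constructor
          · intro h; exact ⟨hik, by omega⟩
          · intro h; omega
        exact if_congr hiff rfl rfl
      · rw [if_neg hik]
        symm
        refine Finset.sum_eq_zero fun j _ => ?_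
        rw [if_neg (by tauto)]
    -- coarea identity for E
    set P : Fin n → Fin n → ℝ :=
      fun i j => if (i : ℕ) < (j : ℕ) then (u i.val - u j.val) * B i j else 0 with hPdef
    have hID2 : E = 2 * ∑ k ∈ Finset.range n, c k * cut k := by
      have h0 : E = ∑ i : Fin n, ∑ j : Fin n, |u i.val - u j.val| * B i j := by
        rw [hEdef, ← Equiv.sum_comp e (fun x => ∑ y, |g x ^ 2 - g y ^ 2| * b x y)]
        refine Finset.sum_congr rfl fun i _ => ?_
        rw [← Equiv.sum_comp e (fun y => |g (e i) ^ 2 - g y ^ 2| * b (e i) y)]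
        exact Finset.sum_congr rfl fun j _ => by rw [huval i, huval j, hBdef]
      have hpt : ∀ i j : Fin n, |u i.val - u j.val| * B i j = P i j + P j i := by
        intro i j
        simp only [hPdef]
        rcases lt_trichotomy (i : ℕ) (j : ℕ) with h | h | h
        · rw [if_pos h, if_neg (by omega), add_zero,
            abs_of_nonneg (sub_nonneg.mpr (huanti h.le))]
        · rw [if_neg (by omega), if_neg (by omega), add_zero]
          have hij : i = j := Fin.ext h
          rw [hij, sub_self, abs_zero, zero_mul]
        · rw [if_neg (by omega), if_pos h, zero_add,
            abs_of_nonpos (sub_nonpos.mpr (huanti h.le)), hBdef]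
          simp only
          rw [hsymm (e i) (e j)]
          ring
      have h1 : E = 2 * ∑ i : Fin n, ∑ j : Fin n, P i j := by
        calc E = ∑ i : Fin n, ∑ j : Fin n, (P i j + P j i) := by
              rw [h0]
              exact Finset.sum_congr rfl fun i _ =>
                Finset.sum_congr rfl fun j _ => hpt i j
          _ = (∑ i : Fin n, ∑ j : Fin n, P i j)
              + (∑ i : Fin n, ∑ j : Fin n, P j i) := by
              rw [← Finset.sum_add_distrib]
              exact Finset.sum_congr rfl fun i _ => Finset.sum_add_distrib
          _ = (∑ i : Fin n, ∑ j : Fin n, P i j)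
              + (∑ i : Fin n, ∑ j : Fin n, P i j) := by
              congr 1
              exact Finset.sum_comm
          _ = 2 * ∑ i : Fin n, ∑ j : Fin n, P i j := by ring
      have hP2 : ∀ i j : Fin n, P i j = ∑ k ∈ Finset.range n,
          (if (i : ℕ) ≤ k ∧ k < (j : ℕ) then c k * B i j else 0) := by
        intro i j
        by_cases hij : (i : ℕ) < (j : ℕ)
        · simp only [hPdef, if_pos hij]
          rw [← Finset.sum_filter]
          have hfe : Finset.filter (fun k => (i : ℕ) ≤ k ∧ k < (j : ℕ)) (Finset.range n)
              = Finset.Ico (i : ℕ) (j : ℕ) := by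
            ext k
            simp only [Finset.mem_filter, Finset.mem_range, Finset.mem_Ico]
            have := j.isLt
            omega
          rw [hfe, ← Finset.sum_mul, hcdef, telescope_aux u hij.le]
        · simp only [hPdef, if_neg hij]
          symm
          exact Finset.sum_eq_zero fun k _ => if_neg (by omega)
      rw [h1]
      congr 1
      calc (∑ i : Fin n, ∑ j : Fin n, P i j)
          = ∑ i : Fin n, ∑ j : Fin n, ∑ k ∈ Finset.range n,
            (if (i : ℕ) ≤ k ∧ k < (j : ℕ) then c k * B i j else 0) :=
          Finset.sum_congr rfl fun i _ => Finset.sum_congr rfl fun j _ => hP2 i j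
        _ = ∑ i : Fin n, ∑ k ∈ Finset.range n, ∑ j : Fin n,
            (if (i : ℕ) ≤ k ∧ k < (j : ℕ) then c k * B i j else 0) :=
          Finset.sum_congr rfl fun i _ => Finset.sum_comm
        _ = ∑ k ∈ Finset.range n, ∑ i : Fin n, ∑ j : Fin n,
            (if (i : ℕ) ≤ k ∧ k < (j : ℕ) then c k * B i j else 0) := Finset.sum_comm
        _ = ∑ k ∈ Finset.range n, c k * cut k := by
          refine Finset.sum_congr rfl fun k _ => ?_
          rw [hcutk k, Finset.mul_sum]
          refine Finset.sum_congr rfl fun i _ => ?_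
          rw [Finset.mul_sum]
          exact Finset.sum_congr rfl fun j _ => by split <;> simp
    -- key per-level inequality
    have hkk : ∀ k ∈ Finset.range n, c k * (hf * vol k) ≤ c k * cut k := by
      intro k hk
      rcases le_or_gt (u k) 0 with h0 | h0
      · have h1 : u k = 0 := le_antisymm h0 (hunn k)
        have h2 : u (k + 1) = 0 := le_antisymm (h1 ▸ hustep k) (hunn (k + 1))
        have h3 : c k = 0 := by rw [hcdef]; simp [h1, h2]
        simp [h3]
      · have hkn : k < n := Finset.mem_range.mp hk
        have hne : (S k).Nonempty := by
          refine ⟨e ⟨k, hkn⟩, ?_⟩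
          simp [hSdef]
        have hSsub : ∀ x ∈ S k, 0 < f x := by
          intro x hx
          have hx' : ((e.symm x : Fin n) : ℕ) ≤ k := by
            simpa [hSdef] using hx
          have h3 : u k ≤ u ((e.symm x : Fin n) : ℕ) := huanti hx'
          have h4 : u ((e.symm x : Fin n) : ℕ) = g x ^ 2 := by
            rw [huval (e.symm x), Equiv.apply_symm_apply]
          have h5 : 0 < g x ^ 2 := lt_of_lt_of_le h0 (h4 ▸ h3)
          by_contra hfx
          push_neg at hfx
          have h6 : g x = 0 := max_eq_right hfx
          rw [h6] at h5
          simp at h5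
        have hvpos : 0 < vol k := by
          simp only [hvoldef]
          exact Finset.sum_pos (fun x _ => hdpos x) hne
        have hmem : (cut k) / (vol k) ∈ {r : ℝ | ∃ T : Finset V, T.Nonempty ∧
            (∀ x ∈ T, 0 < f x) ∧
            r = (∑ x ∈ T, ∑ y ∈ Tᶜ, b x y) / (∑ x ∈ T, ∑ y, b x y)} :=
          ⟨S k, hne, hSsub, rfl⟩
        have hle : hf ≤ cut k / vol k := hmin.2 hmem
        have h6 : hf * vol k ≤ cut k := by
          rw [← le_div_iff₀ hvpos]
          exact hle
        exact mul_le_mul_of_nonneg_left h6 (hcnn k)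
    -- assemble
    have hstep : hf * D = ∑ k ∈ Finset.range n, c k * (hf * vol k) := by
      rw [hID1, Finset.mul_sum]
      exact Finset.sum_congr rfl fun k _ => by ring
    calc 2 * (hf * D) = 2 * ∑ k ∈ Finset.range n, c k * (hf * vol k) := by rw [hstep]
      _ ≤ 2 * ∑ k ∈ Finset.range n, c k * cut k := by
        have := Finset.sum_le_sum hkk
        linarith
      _ = E := hID2.symm
  -- ### conclude
  have hfnn : 0 ≤ hf := by
    obtain ⟨S, hSne, hSpos, hr⟩ := hmin.1
    have h1 : 0 ≤ ∑ x ∈ S, ∑ y ∈ Sᶜ, b x y :=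
      Finset.sum_nonneg fun x _ => Finset.sum_nonneg fun y _ => hnn x y
    have h2 : 0 ≤ ∑ x ∈ S, ∑ y, b x y :=
      Finset.sum_nonneg fun x _ => (hdpos x).le
    rw [hr]; exact div_nonneg h1 h2
  have hkey : W ^ 2 ≤ (1 - hf ^ 2) * D ^ 2 := by
    have hEnn : 0 ≤ E := le_trans (by positivity) hcoarea
    have h1 : (2 * (hf * D)) ^ 2 ≤ E ^ 2 := by
      apply pow_le_pow_left₀ (by positivity) hcoarea
    nlinarith [hCS]
  have h1m : 0 ≤ 1 - hf ^ 2 := by nlinarith [hkey, sq_nonneg W, mul_pos hDpos hDpos]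
  have hWle : W ≤ Real.sqrt (1 - hf ^ 2) * D := by
    have h1 : W = Real.sqrt (W ^ 2) := (Real.sqrt_sq hWnn).symm
    rw [h1]
    calc Real.sqrt (W ^ 2) ≤ Real.sqrt ((1 - hf ^ 2) * D ^ 2) := Real.sqrt_le_sqrt hkey
      _ = Real.sqrt (1 - hf ^ 2) * D := by
          rw [Real.sqrt_mul h1m, Real.sqrt_sq hDpos.le]
  have hWdiv : W / D ≤ Real.sqrt (1 - hf ^ 2) := by
    rw [div_le_iff₀ hDpos]; exact hWle
  have hsplit : (D - W) / D = 1 - W / D := by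
    field_simp
  rw [hsplit]
  constructor
  · linarith
  · have : 0 ≤ W / D := div_nonneg hWnn hDpos.le
    have := Real.sqrt_nonneg (1 - hf ^ 2)
    linarith
end

section
/- Let (V,b) be a finite connected weighted graph with N vertices and no isolated vertices, and let λ_{N−1} be the largest eigenvalue of the normalized Laplacian. Then 2·h̄ ≤ λ_{N−1}, where h̄ is the dual Cheeger constant. -/
open Finset

theorem two_dual_cheeger_le_largest_eigenvalue
    {V : Type*} [Fintype V] [DecidableEq V]
    (b : V → V → ℝ)
    (hsymm : ∀ x y, b x y = b y x)
    (hnn : ∀ x y, 0 ≤ b x y)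
    (hloop : ∀ x, b x x = 0)
    (hiso : ∀ x, 0 < ∑ y, b x y)
    (hconn : ∀ x y : V, Relation.ReflTransGen (fun u v => 0 < b u v) x y)
    (hbar lam : ℝ)
    (hbarMax : IsGreatest {r : ℝ | ∃ V1 V2 : Finset V, V1.Nonempty ∧ V2.Nonempty ∧
      Disjoint V1 V2 ∧
      r = 2 * (∑ x ∈ V1, ∑ y ∈ V2, b x y) /
        ((∑ x ∈ V1, ∑ y, b x y) + (∑ x ∈ V2, ∑ y, b x y))} hbar)
    (hlamMax : IsGreatest {r : ℝ | ∃ f : V → ℝ, f ≠ 0 ∧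
      r = (∑ x, (∑ y, (f x - f y) * (b x y / (∑ z, b x z))) * f x * (∑ y, b x y)) /
        (∑ x, f x ^ 2 * (∑ y, b x y))} lam) :
    2 * hbar ≤ lam := by
  classical
  obtain ⟨V1, V2, hV1, hV2, hdisj, hbar_eq⟩ := hbarMax.1
  set f : V → ℝ := fun x => (if x ∈ V1 then (1:ℝ) else 0) - (if x ∈ V2 then 1 else 0)
    with hf
  have hf1 : ∀ x ∈ V1, f x = 1 := by
    intro x hx
    have hx2 : x ∉ V2 := fun h => Finset.disjoint_left.mp hdisj hx h
    simp [hf, hx, hx2]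
  have hf2 : ∀ x ∈ V2, f x = -1 := by
    intro x hx
    have hx1 : x ∉ V1 := fun h => Finset.disjoint_left.mp hdisj h hx
    simp [hf, hx, hx1]
  have hfne : f ≠ 0 := by
    obtain ⟨x, hx⟩ := hV1
    intro h
    have h1 := hf1 x hx
    rw [h] at h1
    simp at h1
  set B12 : ℝ := ∑ x ∈ V1, ∑ y ∈ V2, b x y with hB12
  set N : ℝ := ∑ x, ∑ y, (f x - f y) * f x * b x y with hN
  set D : ℝ := ∑ x, f x ^ 2 * (∑ y, b x y) with hD
  -- numerator rewrite
  have hnum : ∀ x, (∑ y, (f x - f y) * (b x y / (∑ z, b x z))) * f x * (∑ y, b x y)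
      = ∑ y, (f x - f y) * f x * b x y := by
    intro x
    have hdx : (∑ z, b x z) ≠ 0 := ne_of_gt (hiso x)
    have e1 : (∑ y, (f x - f y) * (b x y / (∑ z, b x z)))
        = (∑ y, (f x - f y) * b x y) / (∑ z, b x z) := by
      rw [Finset.sum_div]
      exact Finset.sum_congr rfl fun y _ => by ring
    rw [e1, div_mul_eq_mul_div, div_mul_eq_mul_div, div_eq_iff hdx]
    congr 1
    rw [Finset.sum_mul]
    exact Finset.sum_congr rfl fun y _ => by ring
  -- symmetrization
  have hswap : (∑ x, ∑ y, (f y - f x) * f y * b x y) = N := by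
    rw [Finset.sum_comm]
    exact Finset.sum_congr rfl fun x _ => Finset.sum_congr rfl fun y _ => by
      rw [hsymm y x]
  have h2N : 2 * N = ∑ x, ∑ y, (f x - f y) ^ 2 * b x y := by
    have : 2 * N = N + (∑ x, ∑ y, (f y - f x) * f y * b x y) := by rw [hswap]; ring
    rw [this, hN, ← Finset.sum_add_distrib]
    refine Finset.sum_congr rfl fun x _ => ?_
    rw [← Finset.sum_add_distrib]
    exact Finset.sum_congr rfl fun y _ => by ring
  -- lower bound for the energy
  have hbound : 8 * B12 ≤ ∑ x, ∑ y, (f x - f y) ^ 2 * b x y := by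
    have hterm : ∀ x y, (0:ℝ) ≤ (f x - f y) ^ 2 * b x y :=
      fun x y => mul_nonneg (sq_nonneg _) (hnn x y)
    have hinner1 : ∀ x ∈ V1, ∑ y ∈ V2, 4 * b x y ≤ ∑ y, (f x - f y) ^ 2 * b x y := by
      intro x hx
      calc ∑ y ∈ V2, 4 * b x y = ∑ y ∈ V2, (f x - f y) ^ 2 * b x y := by
            refine Finset.sum_congr rfl fun y hy => ?_
            rw [hf1 x hx, hf2 y hy]; ring
        _ ≤ ∑ y, (f x - f y) ^ 2 * b x y :=
            Finset.sum_le_sum_of_subset_of_nonneg (Finset.subset_univ _)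
              (fun y _ _ => hterm x y)
    have hinner2 : ∀ x ∈ V2, ∑ y ∈ V1, 4 * b x y ≤ ∑ y, (f x - f y) ^ 2 * b x y := by
      intro x hx
      calc ∑ y ∈ V1, 4 * b x y = ∑ y ∈ V1, (f x - f y) ^ 2 * b x y := by
            refine Finset.sum_congr rfl fun y hy => ?_
            rw [hf2 x hx, hf1 y hy]; ring
        _ ≤ ∑ y, (f x - f y) ^ 2 * b x y :=
            Finset.sum_le_sum_of_subset_of_nonneg (Finset.subset_univ _)
              (fun y _ _ => hterm x y)
    have hsplit : (∑ x ∈ V1, ∑ y, (f x - f y) ^ 2 * b x y)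
        + (∑ x ∈ V2, ∑ y, (f x - f y) ^ 2 * b x y)
        ≤ ∑ x, ∑ y, (f x - f y) ^ 2 * b x y := by
      rw [← Finset.sum_union hdisj]
      exact Finset.sum_le_sum_of_subset_of_nonneg (Finset.subset_univ _)
        (fun x _ _ => Finset.sum_nonneg fun y _ => hterm x y)
    have hB21 : (∑ x ∈ V2, ∑ y ∈ V1, b x y) = B12 := by
      rw [hB12, Finset.sum_comm]
      exact Finset.sum_congr rfl fun x _ => Finset.sum_congr rfl fun y _ => hsymm y x
    have h1 : 4 * B12 ≤ ∑ x ∈ V1, ∑ y, (f x - f y) ^ 2 * b x y := by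
      calc 4 * B12 = ∑ x ∈ V1, ∑ y ∈ V2, 4 * b x y := by
            rw [hB12, Finset.mul_sum]
            exact Finset.sum_congr rfl fun x _ => by rw [Finset.mul_sum]
        _ ≤ _ := Finset.sum_le_sum hinner1
    have h2 : 4 * B12 ≤ ∑ x ∈ V2, ∑ y, (f x - f y) ^ 2 * b x y := by
      calc 4 * B12 = ∑ x ∈ V2, ∑ y ∈ V1, 4 * b x y := by
            rw [← hB21, Finset.mul_sum]
            exact Finset.sum_congr rfl fun x _ => by rw [Finset.mul_sum]
        _ ≤ _ := Finset.sum_le_sum hinner2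
    linarith
  have hNB : 4 * B12 ≤ N := by linarith
  -- denominator
  have hDeq : D = (∑ x ∈ V1, ∑ y, b x y) + (∑ x ∈ V2, ∑ y, b x y) := by
    rw [hD]
    have : ∀ x, f x ^ 2 * (∑ y, b x y)
        = (if x ∈ V1 then (∑ y, b x y) else 0) + (if x ∈ V2 then (∑ y, b x y) else 0) := by
      intro x
      by_cases h1 : x ∈ V1 <;> by_cases h2 : x ∈ V2
      · exact absurd h2 (Finset.disjoint_left.mp hdisj h1)
      · simp [hf, h1, h2]
      · simp [hf, h1, h2]
      · simp [hf, h1, h2]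
    rw [Finset.sum_congr rfl fun x _ => this x, Finset.sum_add_distrib,
      Finset.sum_ite_mem, Finset.sum_ite_mem, Finset.univ_inter, Finset.univ_inter]
  have hDpos : 0 < D := by
    rw [hDeq]
    have h1 : 0 < ∑ x ∈ V1, ∑ y, b x y := Finset.sum_pos (fun x _ => hiso x) hV1
    have h2 : 0 ≤ ∑ x ∈ V2, ∑ y, b x y := Finset.sum_nonneg fun x _ => le_of_lt (hiso x)
    linarith
  -- Rayleigh quotient is in the set
  have hray : N / D ≤ lam := by
    apply hlamMax.2
    refine ⟨f, hfne, ?_⟩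
    rw [hN, hD]
    congr 1
    exact (Finset.sum_congr rfl fun x _ => hnum x).symm
  have hbar_val : 2 * hbar = 4 * B12 / D := by
    rw [hbar_eq, hDeq, hB12]
    ring
  rw [hbar_val]
  calc 4 * B12 / D ≤ N / D := by gcongr
    _ ≤ lam := hray
end

section
/- Let (V,b) be a finite connected weighted graph with N vertices and no isolated vertices, and let λ_{N−1} be the largest eigenvalue of the normalized Laplacian. Then λ_{N−1} ≤ 1 + √(1 − (1 − h̄)²), where h̄ is the dual Cheeger constant. -/
open Finset

lemma layer_cake_aux (C : Finset ℝ) (hne : C.Nonempty) (hpos : ∀ c ∈ C, 0 < c) :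
    ∃ (k : ℕ) (c w : ℕ → ℝ), 0 < k ∧ (∀ j, j < k → c j ∈ C) ∧ (∀ j, j < k → 0 ≤ w j) ∧
      ∀ m : ℝ, (m = 0 ∨ m ∈ C) →
        (∑ j ∈ Finset.range k, w j * (if c j ≤ m then 1 else 0)) = m := by
  classical
  obtain ⟨k, hk⟩ : ∃ k, C.card = k := ⟨C.card, rfl⟩
  have k0 : 0 < k := hk ▸ Finset.card_pos.mpr hne
  set e := C.orderEmbOfFin hk with he
  set c : ℕ → ℝ := fun j => if h : j < k then e ⟨j, h⟩ else 0 with hc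
  set g : ℕ → ℝ := fun j => if j = 0 then 0 else c (j - 1) with hg
  set w : ℕ → ℝ := fun j => g (j + 1) - g j with hw
  have cmem : ∀ j, j < k → c j ∈ C := by
    intro j hj
    simp only [hc, dif_pos hj]
    exact Finset.orderEmbOfFin_mem C hk ⟨j, hj⟩
  have cmono : ∀ i j, i < k → j < k → (c i ≤ c j ↔ i ≤ j) := by
    intro i j hi hj
    simp only [hc, dif_pos hi, dif_pos hj]
    rw [e.le_iff_le]
    exact Iff.rfl
  have cpos : ∀ j, j < k → 0 < c j := fun j hj => hpos _ (cmem j hj)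
  have gsucc : ∀ j, g (j + 1) = c j := by intro j; simp [hg]
  refine ⟨k, c, w, k0, cmem, ?_, ?_⟩
  · intro j hj
    rcases Nat.eq_zero_or_pos j with h0 | h0
    · subst h0
      show 0 ≤ g (0+1) - g 0
      rw [gsucc]
      simp only [hg, if_pos rfl, sub_zero]
      exact (cpos 0 k0).le
    · have : g j = c (j - 1) := by simp [hg, Nat.pos_iff_ne_zero.mp h0]
      rw [hw]
      simp only [gsucc, this, sub_nonneg]
      rw [cmono _ _ (lt_of_le_of_lt (Nat.sub_le j 1) hj) hj]
      omega
  · intro m hm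
    rcases hm with rfl | hm
    · rw [Finset.sum_eq_zero]
      intro j hj
      rw [if_neg (not_le.mpr (cpos j (Finset.mem_range.mp hj))), mul_zero]
    · have : m ∈ Set.range e := by rw [Finset.range_orderEmbOfFin]; exact hm
      obtain ⟨⟨j₀, hj₀⟩, hj₀m⟩ := this
      have hcj₀ : c j₀ = m := by simp only [hc, dif_pos hj₀]; exact hj₀m
      have step : ∀ j ∈ Finset.range k,
          w j * (if c j ≤ m then 1 else 0) = if j ∈ Finset.range (j₀ + 1) then w j else 0 := by
        intro j hj
        have hjk := Finset.mem_range.mp hj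
        rw [← hcj₀, ]
        by_cases h : c j ≤ c j₀
        · rw [if_pos h, mul_one, if_pos]
          rw [Finset.mem_range]
          have := (cmono j j₀ hjk hj₀).mp h
          omega
        · rw [if_neg h, mul_zero, if_neg]
          rw [Finset.mem_range]
          intro hcon
          exact h ((cmono j j₀ hjk hj₀).mpr (by omega))
      rw [Finset.sum_congr rfl step, Finset.sum_ite_mem, Finset.inter_comm]
      have : Finset.range (j₀ + 1) ∩ Finset.range k = Finset.range (j₀ + 1) := by
        ext a
        simp only [Finset.mem_inter, Finset.mem_range]
        omega
      rw [this, hw]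
      have := Finset.sum_range_sub g (j₀ + 1)
      rw [this]
      simp [gsucc, hg, hcj₀]

theorem largest_eigenvalue_le_dual_cheeger_bound
    {V : Type*} [Fintype V] [DecidableEq V]
    (b : V → V → ℝ)
    (hsymm : ∀ x y, b x y = b y x)
    (hnn : ∀ x y, 0 ≤ b x y)
    (hloop : ∀ x, b x x = 0)
    (hiso : ∀ x, 0 < ∑ y, b x y)
    (hconn : ∀ x y : V, Relation.ReflTransGen (fun u v => 0 < b u v) x y)
    (hbar lam : ℝ)
    (hbarMax : IsGreatest {r : ℝ | ∃ V1 V2 : Finset V, V1.Nonempty ∧ V2.Nonempty ∧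
      Disjoint V1 V2 ∧
      r = 2 * (∑ x ∈ V1, ∑ y ∈ V2, b x y) /
        ((∑ x ∈ V1, ∑ y, b x y) + (∑ x ∈ V2, ∑ y, b x y))} hbar)
    (hlamMax : IsGreatest {r : ℝ | ∃ f : V → ℝ, f ≠ 0 ∧
      r = (∑ x, (∑ y, (f x - f y) * (b x y / (∑ z, b x z))) * f x * (∑ y, b x y)) /
        (∑ x, f x ^ 2 * (∑ y, b x y))} lam) :
    lam ≤ 1 + Real.sqrt (1 - (1 - hbar) ^ 2) := by
  classical
  by_cases hl1 : lam ≤ 1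
  · have := Real.sqrt_nonneg (1 - (1 - hbar) ^ 2)
    linarith
  push_neg at hl1
  obtain ⟨⟨f, hf0, hfR⟩, hlam_ub⟩ := hlamMax
  obtain ⟨xne, hxne0⟩ := Function.ne_iff.mp hf0
  have hxne : f xne ≠ 0 := by simpa using hxne0
  set D : ℝ := ∑ x, f x ^ 2 * (∑ y, b x y) with hD
  have Dpos : 0 < D := by
    apply Finset.sum_pos' (fun x _ => mul_nonneg (sq_nonneg _) (hiso x).le)
    refine ⟨xne, Finset.mem_univ _, mul_pos ?_ (hiso xne)⟩
    positivity
  -- rewrite the Rayleigh numerator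
  have hnum : (∑ x, (∑ y, (f x - f y) * (b x y / (∑ z, b x z))) * f x * (∑ y, b x y))
      = ∑ x, ∑ y, (f x - f y) * b x y * f x := by
    refine Finset.sum_congr rfl fun x _ => ?_
    have hdx : (∑ z, b x z) ≠ 0 := (hiso x).ne'
    have h1 : (∑ y, (f x - f y) * (b x y / (∑ z, b x z)))
        = (∑ y, (f x - f y) * b x y) / (∑ z, b x z) := by
      rw [Finset.sum_div]
      exact Finset.sum_congr rfl fun y _ => (mul_div_assoc _ _ _).symm
    rw [h1, ← Finset.sum_mul]
    field_simp
  have hRay : (∑ x, ∑ y, (f x - f y) * b x y * f x) = lam * D := by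
    rw [← hnum]
    rw [hfR]
    rw [hnum] at hfR ⊢
    rw [div_mul_cancel₀]
    exact Dpos.ne'
  -- positive and negative parts
  set p : V → ℝ := fun x => max (f x) 0 with hp
  set q : V → ℝ := fun x => max (-f x) 0 with hq
  have hp0 : ∀ x, 0 ≤ p x := fun x => le_max_right _ _
  have hq0 : ∀ x, 0 ≤ q x := fun x => le_max_right _ _
  have hpq : ∀ x, p x - q x = f x := by
    intro x
    rcases le_total 0 (f x) with h | h
    · simp [hp, hq, max_eq_left h, max_eq_right (neg_nonpos.mpr h)]
    · simp [hp, hq, max_eq_right h, max_eq_left (neg_nonneg.mpr h)]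
  have hpqmul : ∀ x, p x * q x = 0 := by
    intro x
    rcases le_total 0 (f x) with h | h
    · simp [hq, max_eq_right (neg_nonpos.mpr h)]
    · simp [hp, max_eq_right h]
  have hpqsq : ∀ x, p x ^ 2 + q x ^ 2 = f x ^ 2 := by
    intro x
    have h1 := hpq x
    have h2 := hpqmul x
    linear_combination (p x - q x + f x) * h1 + 2 * h2
  -- marginal sum helpers
  have margx : ∀ u : V → ℝ, (∑ x, ∑ y, b x y * u x) = ∑ x, u x * (∑ y, b x y) := by
    intro u
    refine Finset.sum_congr rfl fun x _ => ?_
    rw [← Finset.sum_mul]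
    ring
  have margy : ∀ u : V → ℝ, (∑ x, ∑ y, b x y * u y) = ∑ x, u x * (∑ y, b x y) := by
    intro u
    rw [Finset.sum_comm]
    refine Finset.sum_congr rfl fun y _ => ?_
    have h1 : ∀ x : V, b x y * u y = b y x * u y := fun x => by rw [hsymm]
    rw [Finset.sum_congr rfl fun x _ => h1 x, ← Finset.sum_mul]
    ring
  have swap_id : ∀ u v : V → ℝ,
      (∑ x, ∑ y, b x y * (u x * v y)) = ∑ x, ∑ y, b x y * (v x * u y) := by
    intro u v
    rw [Finset.sum_comm]
    refine Finset.sum_congr rfl fun y _ => Finset.sum_congr rfl fun x _ => ?_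
    rw [hsymm]
    ring
  set PP : ℝ := ∑ x, ∑ y, b x y * (p x * p y) with hPP
  set QQ : ℝ := ∑ x, ∑ y, b x y * (q x * q y) with hQQ
  set PQ : ℝ := ∑ x, ∑ y, b x y * (p x * q y) with hPQc
  set Qf : ℝ := ∑ x, ∑ y, b x y * (p x - q y) ^ 2 with hQf
  set Qf' : ℝ := ∑ x, ∑ y, b x y * (p x + q y) ^ 2 with hQf'
  -- Rayleigh expansion
  have hexp : (∑ x, ∑ y, (f x - f y) * b x y * f x)
      = D - ∑ x, ∑ y, b x y * (f x * f y) := by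
    have h1 : ∀ x : V, (∑ y, (f x - f y) * b x y * f x)
        = (∑ y, b x y * f x ^ 2) - ∑ y, b x y * (f x * f y) := by
      intro x
      rw [← Finset.sum_sub_distrib]
      exact Finset.sum_congr rfl fun y _ => by ring
    rw [Finset.sum_congr rfl fun x _ => h1 x, Finset.sum_sub_distrib,
      margx (fun x => f x ^ 2)]
  have hff : (∑ x, ∑ y, b x y * (f x * f y)) = (1 - lam) * D := by
    rw [hRay] at hexp
    linarith
  have hsplit : PP + QQ - 2 * PQ = (1 - lam) * D := by
    rw [← hff]
    have h1 : ∀ x y : V, b x y * (f x * f y)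
        = b x y * (p x * p y) + b x y * (q x * q y)
          - b x y * (p x * q y) - b x y * (q x * p y) := by
      intro x y
      rw [← hpq x, ← hpq y]
      ring
    have h2 : (∑ x, ∑ y, b x y * (q x * p y)) = PQ := swap_id q p
    calc PP + QQ - 2 * PQ
        = PP + QQ - PQ - (∑ x, ∑ y, b x y * (q x * p y)) := by rw [h2]; ring
      _ = ∑ x, ∑ y, b x y * (f x * f y) := by
          rw [hPP, hQQ, hPQc]
          rw [← Finset.sum_add_distrib, ← Finset.sum_sub_distrib, ← Finset.sum_sub_distrib]
          refine Finset.sum_congr rfl fun x _ => ?_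
          rw [← Finset.sum_add_distrib, ← Finset.sum_sub_distrib, ← Finset.sum_sub_distrib]
          exact Finset.sum_congr rfl fun y _ => (h1 x y).symm
  have hDpq : (∑ x, p x ^ 2 * (∑ y, b x y)) + (∑ x, q x ^ 2 * (∑ y, b x y)) = D := by
    rw [hD, ← Finset.sum_add_distrib]
    exact Finset.sum_congr rfl fun x _ => by rw [← add_mul, hpqsq x]
  have hQfid : Qf = (2 - lam) * D - (PP + QQ) := by
    have h1 : Qf = (∑ x, ∑ y, b x y * p x ^ 2) + (∑ x, ∑ y, b x y * q y ^ 2) - 2 * PQ := by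
      rw [hQf, hPQc]
      rw [Finset.mul_sum, ← Finset.sum_add_distrib, ← Finset.sum_sub_distrib]
      refine Finset.sum_congr rfl fun x _ => ?_
      rw [Finset.mul_sum, ← Finset.sum_add_distrib, ← Finset.sum_sub_distrib]
      exact Finset.sum_congr rfl fun y _ => by ring
    rw [h1, margx (fun x => p x ^ 2), margy (fun y => q y ^ 2)]
    linarith [hsplit, hDpq]
  have Qfnn : 0 ≤ Qf :=
    Finset.sum_nonneg fun x _ => Finset.sum_nonneg fun y _ =>
      mul_nonneg (hnn x y) (sq_nonneg _)
  have PPnn : 0 ≤ PP :=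
    Finset.sum_nonneg fun x _ => Finset.sum_nonneg fun y _ =>
      mul_nonneg (hnn x y) (mul_nonneg (hp0 x) (hp0 y))
  have QQnn : 0 ≤ QQ :=
    Finset.sum_nonneg fun x _ => Finset.sum_nonneg fun y _ =>
      mul_nonneg (hnn x y) (mul_nonneg (hq0 x) (hq0 y))
  have hQle : Qf ≤ (2 - lam) * D := by rw [hQfid]; linarith
  have hlam2 : lam ≤ 2 := by
    by_contra hcon
    push_neg at hcon
    have h3 : (2 - lam) * D < 0 := mul_neg_of_neg_of_pos (by linarith) Dpos
    linarith [Qfnn, hQle]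
  have hQsum : Qf + Qf' = 2 * D := by
    have h1 : Qf + Qf'
        = (∑ x, ∑ y, b x y * (2 * p x ^ 2)) + (∑ x, ∑ y, b x y * (2 * q y ^ 2)) := by
      rw [hQf, hQf', ← Finset.sum_add_distrib, ← Finset.sum_add_distrib]
      refine Finset.sum_congr rfl fun x _ => ?_
      rw [← Finset.sum_add_distrib, ← Finset.sum_add_distrib]
      exact Finset.sum_congr rfl fun y _ => by ring
    rw [h1, margx (fun x => 2 * p x ^ 2), margy (fun y => 2 * q y ^ 2)]
    have : (∑ x, 2 * p x ^ 2 * (∑ y, b x y)) + (∑ x, 2 * q x ^ 2 * (∑ y, b x y))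
        = 2 * ((∑ x, p x ^ 2 * (∑ y, b x y)) + (∑ x, q x ^ 2 * (∑ y, b x y))) := by
      rw [mul_add, Finset.mul_sum, Finset.mul_sum]
      congr 1 <;> exact Finset.sum_congr rfl fun x _ => by ring
    rw [this, hDpq]
  -- Cauchy-Schwarz
  set T : ℝ := ∑ x, ∑ y, b x y * |p x ^ 2 - q y ^ 2| with hT
  have hTnn : 0 ≤ T :=
    Finset.sum_nonneg fun x _ => Finset.sum_nonneg fun y _ =>
      mul_nonneg (hnn x y) (abs_nonneg _)
  clear_value D PP QQ PQ Qf Qf' T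
  have hCS : T ^ 2 ≤ Qf * Qf' := by
    have e1 : T = ∑ z ∈ (univ ×ˢ univ : Finset (V × V)),
        (Real.sqrt (b z.1 z.2) * |p z.1 - q z.2|) * (Real.sqrt (b z.1 z.2) * (p z.1 + q z.2)) := by
      rw [hT, Finset.sum_product]
      refine Finset.sum_congr rfl fun x _ => Finset.sum_congr rfl fun y _ => ?_
      have : Real.sqrt (b x y) * |p x - q y| * (Real.sqrt (b x y) * (p x + q y))
          = (Real.sqrt (b x y) * Real.sqrt (b x y)) * (|p x - q y| * (p x + q y)) := by ring
      rw [this, Real.mul_self_sqrt (hnn x y)]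
      congr 1
      rw [show |p x - q y| * (p x + q y) = |p x - q y| * |p x + q y| from by
        rw [abs_of_nonneg (add_nonneg (hp0 x) (hq0 y))]]
      rw [← abs_mul, show (p x - q y) * (p x + q y) = p x ^ 2 - q y ^ 2 from by ring]
    have e2 : Qf = ∑ z ∈ (univ ×ˢ univ : Finset (V × V)),
        (Real.sqrt (b z.1 z.2) * |p z.1 - q z.2|) ^ 2 := by
      rw [hQf, Finset.sum_product]
      refine Finset.sum_congr rfl fun x _ => Finset.sum_congr rfl fun y _ => ?_
      rw [mul_pow, Real.sq_sqrt (hnn x y), sq_abs]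
    have e3 : Qf' = ∑ z ∈ (univ ×ˢ univ : Finset (V × V)),
        (Real.sqrt (b z.1 z.2) * (p z.1 + q z.2)) ^ 2 := by
      rw [hQf', Finset.sum_product]
      refine Finset.sum_congr rfl fun x _ => Finset.sum_congr rfl fun y _ => ?_
      rw [mul_pow, Real.sq_sqrt (hnn x y)]
    rw [e1, e2, e3]
    exact Finset.sum_mul_sq_le_sq_mul_sq _ _ _
  set s : ℝ := Real.sqrt (lam * (2 - lam)) with hs
  have hlamnn : 0 ≤ lam * (2 - lam) := mul_nonneg (by linarith) (by linarith)
  have hs2 : s ^ 2 = lam * (2 - lam) := Real.sq_sqrt hlamnn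
  have hsnn : 0 ≤ s := Real.sqrt_nonneg _
  have hTle : T ≤ s * D := by
    have hQlam : Qf ≤ lam * D := by
      have h3 := mul_le_mul_of_nonneg_right (show (2:ℝ) - lam ≤ lam by linarith) Dpos.le
      linarith [hQle, h3]
    have hfact : 0 ≤ ((2 - lam) * D - Qf) * (lam * D - Qf) :=
      mul_nonneg (by linarith) (by linarith)
    have e : lam * (2 - lam) * D ^ 2 - Qf * Qf' = ((2 - lam) * D - Qf) * (lam * D - Qf) := by
      linear_combination (-Qf) * hQsum
    have h1 : Qf * Qf' ≤ lam * (2 - lam) * D ^ 2 := by linarith [hfact, e]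
    have h2 : T ^ 2 ≤ (s * D) ^ 2 := by
      rw [mul_pow, hs2]
      linarith [hCS, h1]
    calc T = Real.sqrt (T ^ 2) := (Real.sqrt_sq hTnn).symm
      _ ≤ Real.sqrt ((s * D) ^ 2) := Real.sqrt_le_sqrt h2
      _ = s * D := Real.sqrt_sq (mul_nonneg hsnn Dpos.le)
  -- layer cake
  set C : Finset ℝ := (univ.filter fun x => f x ≠ 0).image fun x => f x ^ 2 with hC
  have hCne : C.Nonempty := ⟨f xne ^ 2, Finset.mem_image.mpr ⟨xne, by simp [hxne], rfl⟩⟩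
  have hCpos : ∀ c ∈ C, 0 < c := by
    intro c hc
    obtain ⟨x, hx, rfl⟩ := Finset.mem_image.mp hc
    have hx' : f x ≠ 0 := (Finset.mem_filter.mp hx).2
    positivity
  obtain ⟨k, c, w, k0, cmem, wnn, hlayer⟩ := layer_cake_aux C hCne hCpos
  have hPmem : ∀ x : V, p x ^ 2 = 0 ∨ p x ^ 2 ∈ C := by
    intro x
    rcases le_or_gt (f x) 0 with h | h
    · left; rw [hp]; simp [max_eq_right h]
    · right
      have hx : p x = f x := max_eq_left h.le
      rw [hx]
      exact Finset.mem_image.mpr ⟨x, by simp [h.ne'], rfl⟩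
  have hQmem : ∀ x : V, q x ^ 2 = 0 ∨ q x ^ 2 ∈ C := by
    intro x
    rcases le_or_gt 0 (f x) with h | h
    · left; rw [hq]; simp [max_eq_right (neg_nonpos.mpr h)]
    · right
      have hx : q x = -f x := max_eq_left (by linarith)
      rw [hx]
      exact Finset.mem_image.mpr ⟨x, by simp [h.ne], by ring⟩
  set IP : ℝ → V → ℝ := fun t x => if t ≤ p x ^ 2 then 1 else 0 with hIP
  set IQ : ℝ → V → ℝ := fun t x => if t ≤ q x ^ 2 then 1 else 0 with hIQ
  have layerP : ∀ x : V, (∑ j ∈ Finset.range k, w j * IP (c j) x) = p x ^ 2 :=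
    fun x => hlayer _ (hPmem x)
  have layerQ : ∀ x : V, (∑ j ∈ Finset.range k, w j * IQ (c j) x) = q x ^ 2 :=
    fun x => hlayer _ (hQmem x)
  have layerPQ : ∀ x y : V, (∑ j ∈ Finset.range k, w j * (IP (c j) x * IQ (c j) y))
      = min (p x ^ 2) (q y ^ 2) := by
    intro x y
    have h1 : ∀ j, IP (c j) x * IQ (c j) y
        = if c j ≤ min (p x ^ 2) (q y ^ 2) then (1:ℝ) else 0 := by
      intro j
      rw [hIP, hIQ]
      by_cases h1 : c j ≤ p x ^ 2 <;> by_cases h2 : c j ≤ q y ^ 2 <;>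
        simp [h1, h2, le_min_iff]
    rw [Finset.sum_congr rfl fun j _ => by rw [h1 j]]
    apply hlayer
    rcases le_total (p x ^ 2) (q y ^ 2) with h | h
    · rw [min_eq_left h]; exact hPmem x
    · rw [min_eq_right h]; exact hQmem y
  set volj : ℕ → ℝ := fun j =>
    (∑ x, IP (c j) x * (∑ y, b x y)) + (∑ x, IQ (c j) x * (∑ y, b x y)) with hvolj
  set crossj : ℕ → ℝ := fun j => ∑ x, ∑ y, b x y * (IP (c j) x * IQ (c j) y) with hcrossj
  have hIPnn : ∀ t x, (0:ℝ) ≤ IP t x := by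
    intro t x; rw [hIP]; dsimp only; split_ifs <;> norm_num
  have hIQnn : ∀ t x, (0:ℝ) ≤ IQ t x := by
    intro t x; rw [hIQ]; dsimp only; split_ifs <;> norm_num
  have pull : ∀ (g : ℕ → V → ℝ) (r : V → ℝ),
      (∀ x, (∑ j ∈ Finset.range k, w j * g j x) = r x) →
      (∑ j ∈ Finset.range k, w j * (∑ x, g j x * (∑ y, b x y)))
        = ∑ x, r x * (∑ y, b x y) := by
    intro g r hg
    rw [show (∑ j ∈ Finset.range k, w j * (∑ x, g j x * (∑ y, b x y)))
        = ∑ j ∈ Finset.range k, ∑ x, w j * (g j x * (∑ y, b x y)) from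
      Finset.sum_congr rfl fun j _ => Finset.mul_sum _ _ _]
    rw [Finset.sum_comm]
    refine Finset.sum_congr rfl fun x _ => ?_
    rw [show (∑ j ∈ Finset.range k, w j * (g j x * (∑ y, b x y)))
        = (∑ j ∈ Finset.range k, w j * g j x) * (∑ y, b x y) from by
      rw [Finset.sum_mul]; exact Finset.sum_congr rfl fun j _ => by ring]
    rw [hg x]
  have hvolsum : (∑ j ∈ Finset.range k, w j * volj j) = D := by
    have h0 : ∀ j, w j * volj j = w j * (∑ x, IP (c j) x * (∑ y, b x y))
        + w j * (∑ x, IQ (c j) x * (∑ y, b x y)) := by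
      intro j; rw [hvolj]; ring
    rw [Finset.sum_congr rfl fun j _ => h0 j, Finset.sum_add_distrib,
      pull (fun j x => IP (c j) x) (fun x => p x ^ 2) layerP,
      pull (fun j x => IQ (c j) x) (fun x => q x ^ 2) layerQ, hDpq]
  set M : ℝ := ∑ x, ∑ y, b x y * min (p x ^ 2) (q y ^ 2) with hM
  have hcrosssum : (∑ j ∈ Finset.range k, w j * crossj j) = M := by
    rw [hM]
    simp_rw [hcrossj, Finset.mul_sum]
    rw [Finset.sum_comm]
    refine Finset.sum_congr rfl fun x _ => ?_
    rw [Finset.sum_comm]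
    refine Finset.sum_congr rfl fun y _ => ?_
    rw [show (∑ j ∈ Finset.range k, w j * (b x y * (IP (c j) x * IQ (c j) y)))
        = (∑ j ∈ Finset.range k, w j * (IP (c j) x * IQ (c j) y)) * b x y from by
      rw [Finset.sum_mul]; exact Finset.sum_congr rfl fun j _ => by ring]
    rw [layerPQ x y]
    ring
  have hTid : T = D - 2 * M := by
    have habs : ∀ a a' : ℝ, |a - a'| = a + a' - 2 * min a a' := by
      intro a a'
      rcases le_total a a' with h | h
      · rw [abs_of_nonpos (by linarith), min_eq_left h]; ring
      · rw [abs_of_nonneg (by linarith), min_eq_right h]; ring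
    have h1 : T = (∑ x, ∑ y, b x y * p x ^ 2) + (∑ x, ∑ y, b x y * q y ^ 2) - 2 * M := by
      rw [hT, hM, Finset.mul_sum, ← Finset.sum_add_distrib, ← Finset.sum_sub_distrib]
      refine Finset.sum_congr rfl fun x _ => ?_
      rw [Finset.mul_sum, ← Finset.sum_add_distrib, ← Finset.sum_sub_distrib]
      refine Finset.sum_congr rfl fun y _ => ?_
      rw [habs]
      ring
    rw [h1, margx (fun x => p x ^ 2), margy (fun y => q y ^ 2)]
    rw [show (∑ x, p x ^ 2 * (∑ y, b x y)) + (∑ x, q x ^ 2 * (∑ y, b x y)) = D from hDpq]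
  have hcutsum : (∑ j ∈ Finset.range k, w j * (volj j - 2 * crossj j)) = T := by
    rw [Finset.sum_congr rfl fun j _ =>
        show w j * (volj j - 2 * crossj j)
          = w j * volj j - 2 * (w j * crossj j) from by ring,
      Finset.sum_sub_distrib, hvolsum, ← Finset.mul_sum, hcrosssum, hTid]
  have hvoljpos : ∀ j ∈ Finset.range k, 0 < volj j := by
    intro j hj
    obtain ⟨x, hxf, hxc⟩ := Finset.mem_image.mp (cmem j (Finset.mem_range.mp hj))
    have hxf' : f x ≠ 0 := (Finset.mem_filter.mp hxf).2
    have hnnP : (0:ℝ) ≤ ∑ x, IP (c j) x * (∑ y, b x y) :=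
      Finset.sum_nonneg fun z _ => mul_nonneg (hIPnn _ _) (hiso z).le
    have hnnQ : (0:ℝ) ≤ ∑ x, IQ (c j) x * (∑ y, b x y) :=
      Finset.sum_nonneg fun z _ => mul_nonneg (hIQnn _ _) (hiso z).le
    rcases lt_or_gt_of_ne hxf' with h | h
    · have hqx : q x = -f x := max_eq_left (by linarith)
      have h1 : IQ (c j) x = 1 := by
        rw [hIQ]
        dsimp only
        rw [if_pos]
        rw [hqx, ← hxc]
        exact le_of_eq (by ring)
      have hpos : (0:ℝ) < ∑ x, IQ (c j) x * (∑ y, b x y) := by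
        refine Finset.sum_pos' (fun z _ => mul_nonneg (hIQnn _ _) (hiso z).le)
          ⟨x, Finset.mem_univ _, ?_⟩
        rw [h1, one_mul]; exact hiso x
      rw [hvolj]; dsimp only; linarith
    · have hpx : p x = f x := max_eq_left (by linarith)
      have h1 : IP (c j) x = 1 := by
        rw [hIP]
        dsimp only
        rw [if_pos]
        rw [hpx, ← hxc]
      have hpos : (0:ℝ) < ∑ x, IP (c j) x * (∑ y, b x y) := by
        refine Finset.sum_pos' (fun z _ => mul_nonneg (hIPnn _ _) (hiso z).le)
          ⟨x, Finset.mem_univ _, ?_⟩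
        rw [h1, one_mul]; exact hiso x
      rw [hvolj]; dsimp only; linarith
  -- choose the best threshold
  obtain ⟨j₀, hj₀, hjmin⟩ := Finset.exists_min_image (Finset.range k)
    (fun j => (volj j - 2 * crossj j) / volj j) ⟨0, Finset.mem_range.mpr k0⟩
  set ρ : ℝ := (volj j₀ - 2 * crossj j₀) / volj j₀ with hρ
  have hpt : ∀ j ∈ Finset.range k, ρ * volj j ≤ volj j - 2 * crossj j := by
    intro j hj
    have h1 := hjmin j hj
    exact (le_div_iff₀ (hvoljpos j hj)).mp h1
  have hρD : ρ * D ≤ T := by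
    calc ρ * D = ∑ j ∈ Finset.range k, w j * (ρ * volj j) := by
          rw [← hvolsum, Finset.mul_sum]
          exact Finset.sum_congr rfl fun j _ => by ring
      _ ≤ ∑ j ∈ Finset.range k, w j * (volj j - 2 * crossj j) :=
          Finset.sum_le_sum fun j hj =>
            mul_le_mul_of_nonneg_left (hpt j hj) (wnn j (Finset.mem_range.mp hj))
      _ = T := hcutsum
  have hρs : ρ ≤ s := by
    have h1 : ρ * D ≤ s * D := hρD.trans hTle
    exact le_of_mul_le_mul_right (by linarith [h1]) Dpos
  have hcutle : volj j₀ - 2 * crossj j₀ ≤ s * volj j₀ := by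
    have hv := hvoljpos j₀ hj₀
    have h1 : volj j₀ - 2 * crossj j₀ = ρ * volj j₀ := by
      rw [hρ, div_mul_cancel₀ _ hv.ne']
    rw [h1]
    exact mul_le_mul_of_nonneg_right hρs hv.le
  -- the two sets
  set A : Finset V := univ.filter (fun x => c j₀ ≤ p x ^ 2) with hA
  set B : Finset V := univ.filter (fun x => c j₀ ≤ q x ^ 2) with hB
  have hvA : (∑ x ∈ A, ∑ y, b x y) = ∑ x, IP (c j₀) x * (∑ y, b x y) := by
    rw [hA, Finset.sum_filter]
    refine Finset.sum_congr rfl fun x _ => ?_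
    rw [hIP]
    dsimp only
    by_cases h : c j₀ ≤ p x ^ 2 <;> simp [h]
  have hvB : (∑ x ∈ B, ∑ y, b x y) = ∑ x, IQ (c j₀) x * (∑ y, b x y) := by
    rw [hB, Finset.sum_filter]
    refine Finset.sum_congr rfl fun x _ => ?_
    rw [hIQ]
    dsimp only
    by_cases h : c j₀ ≤ q x ^ 2 <;> simp [h]
  have hvAB : (∑ x ∈ A, ∑ y ∈ B, b x y) = crossj j₀ := by
    rw [hA, hB, Finset.sum_filter, hcrossj]
    dsimp only
    refine Finset.sum_congr rfl fun x _ => ?_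
    rw [Finset.sum_filter]
    by_cases h1 : c j₀ ≤ p x ^ 2
    · rw [if_pos h1]
      refine Finset.sum_congr rfl fun y _ => ?_
      rw [hIP, hIQ]
      dsimp only
      by_cases h2 : c j₀ ≤ q y ^ 2 <;> simp [h1, h2]
    · rw [if_neg h1]
      rw [eq_comm, Finset.sum_eq_zero]
      intro y _
      rw [hIP]
      dsimp only
      rw [if_neg h1]
      ring
  have hvolid : (∑ x ∈ A, ∑ y, b x y) + (∑ x ∈ B, ∑ y, b x y) = volj j₀ := by
    rw [hvA, hvB, hvolj]
  have hcj₀pos : 0 < c j₀ := hCpos _ (cmem j₀ (Finset.mem_range.mp hj₀))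
  have hs1 : s < 1 := by
    have h0 : 0 < (lam - 1) ^ 2 := pow_pos (by linarith) 2
    have h1 : lam * (2 - lam) < 1 := by
      rw [show lam * (2 - lam) = 1 - (lam - 1) ^ 2 from by ring]
      linarith
    calc s < Real.sqrt 1 := Real.sqrt_lt_sqrt hlamnn h1
      _ = 1 := Real.sqrt_one
  have hcrossnn : 0 ≤ crossj j₀ := by
    rw [hcrossj]
    exact Finset.sum_nonneg fun x _ => Finset.sum_nonneg fun y _ =>
      mul_nonneg (hnn x y) (mul_nonneg (hIPnn _ _) (hIQnn _ _))
  have hBne : B.Nonempty := by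
    rw [Finset.nonempty_iff_ne_empty]
    intro hem
    have h1 : crossj j₀ = 0 := by
      rw [← hvAB, hem]
      simp
    have h2 : volj j₀ - 2 * crossj j₀ ≤ s * volj j₀ := hcutle
    rw [h1] at h2
    have h3 := mul_lt_mul_of_pos_right hs1 (hvoljpos j₀ hj₀)
    linarith
  have hAne : A.Nonempty := by
    rw [Finset.nonempty_iff_ne_empty]
    intro hem
    have h1 : crossj j₀ = 0 := by
      rw [← hvAB, hem]
      simp
    have h2 := hcutle
    rw [h1] at h2
    have h3 := mul_lt_mul_of_pos_right hs1 (hvoljpos j₀ hj₀)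
    linarith
  have hdisjAB : Disjoint A B := by
    rw [Finset.disjoint_left]
    intro a haA haB
    rw [hA, Finset.mem_filter] at haA
    rw [hB, Finset.mem_filter] at haB
    have h1 := hpqmul a
    rcases mul_eq_zero.mp h1 with h | h
    · have : p a ^ 2 = 0 := by rw [h]; ring
      rw [this] at haA
      linarith [haA.2]
    · have : q a ^ 2 = 0 := by rw [h]; ring
      rw [this] at haB
      linarith [haB.2]
  have hmem : (2 * (∑ x ∈ A, ∑ y ∈ B, b x y) /
      ((∑ x ∈ A, ∑ y, b x y) + (∑ x ∈ B, ∑ y, b x y)))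
      ∈ {r : ℝ | ∃ V1 V2 : Finset V, V1.Nonempty ∧ V2.Nonempty ∧ Disjoint V1 V2 ∧
        r = 2 * (∑ x ∈ V1, ∑ y ∈ V2, b x y) /
          ((∑ x ∈ V1, ∑ y, b x y) + (∑ x ∈ V2, ∑ y, b x y))} :=
    ⟨A, B, hAne, hBne, hdisjAB, rfl⟩
  have hub := hbarMax.2 hmem
  have hfrac : 1 - s ≤ 2 * (∑ x ∈ A, ∑ y ∈ B, b x y) /
      ((∑ x ∈ A, ∑ y, b x y) + (∑ x ∈ B, ∑ y, b x y)) := by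
    rw [hvolid, hvAB]
    rw [le_div_iff₀ (hvoljpos j₀ hj₀)]
    linarith [hcutle]
  have hhbar : 1 - s ≤ hbar := hfrac.trans hub
  -- hbar ≤ 1
  have hbar1 : hbar ≤ 1 := by
    obtain ⟨W1, W2, hW1, hW2, hWd, hWeq⟩ := hbarMax.1
    have hd1 : (0:ℝ) < ∑ x ∈ W1, ∑ y, b x y :=
      Finset.sum_pos (fun x _ => hiso x) hW1
    have hd2 : (0:ℝ) < ∑ x ∈ W2, ∑ y, b x y :=
      Finset.sum_pos (fun x _ => hiso x) hW2
    have hS1 : (∑ x ∈ W1, ∑ y ∈ W2, b x y) ≤ ∑ x ∈ W1, ∑ y, b x y :=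
      Finset.sum_le_sum fun x _ =>
        Finset.sum_le_sum_of_subset_of_nonneg (Finset.subset_univ _)
          (fun y _ _ => hnn x y)
    have hS2 : (∑ x ∈ W1, ∑ y ∈ W2, b x y) ≤ ∑ x ∈ W2, ∑ y, b x y := by
      rw [Finset.sum_comm]
      calc (∑ y ∈ W2, ∑ x ∈ W1, b x y) = ∑ y ∈ W2, ∑ x ∈ W1, b y x :=
            Finset.sum_congr rfl fun y _ => Finset.sum_congr rfl fun x _ => hsymm x y
        _ ≤ ∑ y ∈ W2, ∑ x, b y x :=
            Finset.sum_le_sum fun y _ =>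
              Finset.sum_le_sum_of_subset_of_nonneg (Finset.subset_univ _)
                (fun x _ _ => hnn y x)
    rw [hWeq, div_le_one (by linarith)]
    linarith
  -- conclude
  have h0hbar : 0 ≤ 1 - hbar := by linarith
  have hsq : (1 - hbar) ^ 2 ≤ lam * (2 - lam) := by
    have h1 : 1 - hbar ≤ s := by linarith
    have h2 := pow_le_pow_left₀ h0hbar h1 2
    rw [hs2] at h2
    exact h2
  have h2 : (lam - 1) ^ 2 ≤ 1 - (1 - hbar) ^ 2 := by
    have h3 : lam * (2 - lam) = 1 - (lam - 1) ^ 2 := by ring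
    linarith [hsq]
  have hfin : lam - 1 ≤ Real.sqrt (1 - (1 - hbar) ^ 2) := by
    calc lam - 1 = Real.sqrt ((lam - 1) ^ 2) := (Real.sqrt_sq (by linarith)).symm
      _ ≤ Real.sqrt (1 - (1 - hbar) ^ 2) := Real.sqrt_le_sqrt h2
  linarith
end

section
/- For a finite connected bipartite weighted graph with no isolated vertices, the largest eigenvalue of the normalized Laplacian equals 2, and both inequalities 2h̄ ≤ λ_{N−1} and λ_{N−1} ≤ 1 + √(1 − (1−h̄)²) are equalities (since h̄ = 1). -/
open Finset

theorem bipartite_equalities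
    {V : Type*} [Fintype V] [DecidableEq V]
    (b : V → V → ℝ)
    (hsymm : ∀ x y, b x y = b y x)
    (hnn : ∀ x y, 0 ≤ b x y)
    (hloop : ∀ x, b x x = 0)
    (hiso : ∀ x, 0 < ∑ y, b x y)
    (hconn : ∀ x y : V, Relation.ReflTransGen (fun u v => 0 < b u v) x y)
    (hbip : ∃ P : V → Bool, ∀ x y, 0 < b x y → P x ≠ P y)
    (hbar lam : ℝ)
    (hbarMax : IsGreatest {r : ℝ | ∃ V1 V2 : Finset V, V1.Nonempty ∧ V2.Nonempty ∧
      Disjoint V1 V2 ∧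
      r = 2 * (∑ x ∈ V1, ∑ y ∈ V2, b x y) /
        ((∑ x ∈ V1, ∑ y, b x y) + (∑ x ∈ V2, ∑ y, b x y))} hbar)
    (hlamMax : IsGreatest {r : ℝ | ∃ f : V → ℝ, f ≠ 0 ∧
      r = (∑ x, (∑ y, (f x - f y) * (b x y / (∑ z, b x z))) * f x * (∑ y, b x y)) /
        (∑ x, f x ^ 2 * (∑ y, b x y))} lam) :
    lam = 2 ∧ hbar = 1 ∧ 2 * hbar = lam ∧
      lam = 1 + Real.sqrt (1 - (1 - hbar) ^ 2) := by
  classical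
  obtain ⟨P, hP⟩ := hbip
  obtain ⟨hlam_mem, hlam_ub⟩ := hlamMax
  obtain ⟨hbar_mem, hbar_ub⟩ := hbarMax
  obtain ⟨f0, hf0ne, hlam_eq⟩ := hlam_mem
  -- V is nonempty
  have hV : Nonempty V := by
    by_contra h
    exact hf0ne (funext fun x => absurd ⟨x⟩ h)
  obtain ⟨x0⟩ := hV
  -- every vertex has a neighbor
  have hedge : ∀ x : V, ∃ y, 0 < b x y := by
    intro x
    by_contra h
    push_neg at h
    have : (∑ y, b x y) ≤ 0 := Finset.sum_nonpos fun y _ => h y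
    linarith [hiso x]
  -- simplification of the numerator of the Rayleigh quotient
  have hnum : ∀ f : V → ℝ,
      (∑ x, (∑ y, (f x - f y) * (b x y / (∑ z, b x z))) * f x * (∑ y, b x y)) =
        ∑ x, (∑ y, (f x - f y) * b x y) * f x := by
    intro f
    refine Finset.sum_congr rfl fun x _ => ?_
    have hd : (∑ z, b x z) ≠ 0 := (hiso x).ne'
    simp only [← mul_div_assoc]
    rw [← Finset.sum_div]
    field_simp
  -- Rayleigh quotient bound: every quotient is ≤ 2
  have hQ_le : ∀ f : V → ℝ, f ≠ 0 →
      (∑ x, (∑ y, (f x - f y) * (b x y / (∑ z, b x z))) * f x * (∑ y, b x y)) /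
        (∑ x, f x ^ 2 * (∑ y, b x y)) ≤ 2 := by
    intro f hf
    set A := ∑ x, ∑ y, f x ^ 2 * b x y with hAdef
    set B := ∑ x, ∑ y, f x * f y * b x y with hBdef
    have hA' : (∑ x, f x ^ 2 * (∑ y, b x y)) = A := by
      simp_rw [hAdef, Finset.mul_sum]
    have hswap : (∑ x, ∑ y, f y ^ 2 * b x y) = A := by
      rw [hAdef, Finset.sum_comm]
      exact Finset.sum_congr rfl fun x _ =>
        Finset.sum_congr rfl fun y _ => by rw [hsymm]
    have hN : (∑ x, (∑ y, (f x - f y) * b x y) * f x) = A - B := by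
      rw [hAdef, hBdef, ← Finset.sum_sub_distrib]
      refine Finset.sum_congr rfl fun x _ => ?_
      rw [Finset.sum_mul, ← Finset.sum_sub_distrib]
      exact Finset.sum_congr rfl fun y _ => by ring
    have hS : (∑ x, ∑ y, (f x + f y) ^ 2 * b x y) = 2 * A + 2 * B := by
      have he : ∀ x y : V, (f x + f y) ^ 2 * b x y =
          f x ^ 2 * b x y + f y ^ 2 * b x y + 2 * (f x * f y * b x y) := by
        intro x y; ring
      simp_rw [he, Finset.sum_add_distrib, ← Finset.mul_sum]
      rw [hswap, hA']
      ring
    have hS0 : (0 : ℝ) ≤ ∑ x, ∑ y, (f x + f y) ^ 2 * b x y :=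
      Finset.sum_nonneg fun x _ => Finset.sum_nonneg fun y _ =>
        mul_nonneg (sq_nonneg _) (hnn x y)
    have hD : 0 < ∑ x, f x ^ 2 * (∑ y, b x y) := by
      obtain ⟨x, hx⟩ : ∃ x, f x ≠ 0 := by
        by_contra h
        push_neg at h
        exact hf (funext h)
      refine Finset.sum_pos' (fun y _ => mul_nonneg (sq_nonneg _) (hiso y).le)
        ⟨x, Finset.mem_univ x, ?_⟩
      exact mul_pos (by positivity) (hiso x)
    rw [hnum f, div_le_iff₀ hD, hN]
    rw [hA'] at hD ⊢
    nlinarith [hS0, hS]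
  -- lam ≤ 2
  have hlam_le : lam ≤ 2 := hlam_eq ▸ hQ_le f0 hf0ne
  -- the bipartite test function gives quotient 2
  have hlam_ge : 2 ≤ lam := by
    set g : V → ℝ := fun x => if P x then 1 else -1 with hgdef
    have hgsq : ∀ x, g x ^ 2 = 1 := by
      intro x; simp only [hgdef]; split <;> norm_num
    have hgne : g ≠ 0 := by
      intro h
      have := congrFun h x0
      have h1 := hgsq x0
      rw [this] at h1
      norm_num at h1
    have hg : ∀ x y, (g x - g y) * b x y = 2 * g x * b x y := by
      intro x y
      rcases eq_or_lt_of_le (hnn x y) with h | h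
      · rw [← h]; ring
      · have hne := hP x y h
        cases hPx : P x <;> cases hPy : P y <;>
          rw [hPx, hPy] at hne <;>
          first
          | exact absurd rfl hne
          | (simp only [hgdef, hPx, hPy]; norm_num)
    refine hlam_ub ⟨g, hgne, ?_⟩
    rw [hnum g]
    have hnum2 : (∑ x, (∑ y, (g x - g y) * b x y) * g x) =
        2 * ∑ x, g x ^ 2 * (∑ y, b x y) := by
      rw [Finset.mul_sum]
      refine Finset.sum_congr rfl fun x _ => ?_
      have : (∑ y, (g x - g y) * b x y) = ∑ y, 2 * g x * b x y :=
        Finset.sum_congr rfl fun y _ => hg x y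
      rw [this, ← Finset.mul_sum]
      have := hgsq x
      nlinarith [hgsq x]
    have hD : 0 < ∑ x, g x ^ 2 * (∑ y, b x y) := by
      refine Finset.sum_pos (fun x _ => ?_) ⟨x0, Finset.mem_univ x0⟩
      rw [hgsq x]; simpa using hiso x
    rw [hnum2, mul_div_assoc, div_self hD.ne']
    norm_num
  have hlam2 : lam = 2 := le_antisymm hlam_le hlam_ge
  -- hbar ≤ 1
  have hbar_le : hbar ≤ 1 := by
    obtain ⟨V1, V2, hV1, hV2, hdisj, hr⟩ := hbar_mem
    have hC1 : (∑ x ∈ V1, ∑ y ∈ V2, b x y) ≤ ∑ x ∈ V1, ∑ y, b x y :=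
      Finset.sum_le_sum fun x _ =>
        Finset.sum_le_sum_of_subset_of_nonneg (Finset.subset_univ V2)
          (fun y _ _ => hnn x y)
    have hC2 : (∑ x ∈ V1, ∑ y ∈ V2, b x y) ≤ ∑ x ∈ V2, ∑ y, b x y := by
      rw [Finset.sum_comm]
      refine Finset.sum_le_sum fun y _ => ?_
      calc (∑ x ∈ V1, b x y) = ∑ x ∈ V1, b y x :=
            Finset.sum_congr rfl fun x _ => hsymm x y
        _ ≤ ∑ x, b y x :=
            Finset.sum_le_sum_of_subset_of_nonneg (Finset.subset_univ V1)
              (fun x _ _ => hnn y x)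
    have hD1 : 0 < ∑ x ∈ V1, ∑ y, b x y :=
      Finset.sum_pos (fun x _ => hiso x) hV1
    have hD2 : 0 < ∑ x ∈ V2, ∑ y, b x y :=
      Finset.sum_pos (fun x _ => hiso x) hV2
    rw [hr, div_le_one (by linarith)]
    linarith
  -- hbar ≥ 1 : the bipartition achieves 1
  have hbar_ge : 1 ≤ hbar := by
    set V1 : Finset V := Finset.univ.filter (fun x => P x = true) with hV1def
    set V2 : Finset V := Finset.univ.filter (fun x => P x = false) with hV2def
    obtain ⟨y0, hy0⟩ := hedge x0
    have hPxy := hP x0 y0 hy0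
    have hV1ne : V1.Nonempty := by
      cases hPx : P x0 with
      | true => exact ⟨x0, by simp [hV1def, hPx]⟩
      | false =>
        have hPy : P y0 = true := by
          cases hPy : P y0 with
          | true => rfl
          | false => exact absurd (hPx.trans hPy.symm) hPxy
        exact ⟨y0, by simp [hV1def, hPy]⟩
    have hV2ne : V2.Nonempty := by
      cases hPx : P x0 with
      | false => exact ⟨x0, by simp [hV2def, hPx]⟩
      | true =>
        have hPy : P y0 = false := by
          cases hPy : P y0 with
          | false => rfl
          | true => exact absurd (hPx.trans hPy.symm) hPxy
        exact ⟨y0, by simp [hV2def, hPy]⟩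
    have hdisj : Disjoint V1 V2 := by
      rw [Finset.disjoint_left]
      intro a ha1 ha2
      simp only [hV1def, hV2def, Finset.mem_filter] at ha1 ha2
      rw [ha1.2] at ha2
      exact absurd ha2.2 (by simp)
    -- the cut equals the volume of V1 and of V2
    have hzero : ∀ x y, P x = P y → b x y = 0 := by
      intro x y hxy
      rcases eq_or_lt_of_le (hnn x y) with h | h
      · exact h.symm
      · exact absurd hxy (hP x y h)
    have hcut1 : (∑ x ∈ V1, ∑ y ∈ V2, b x y) = ∑ x ∈ V1, ∑ y, b x y := by
      refine Finset.sum_congr rfl fun x hx => ?_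
      simp only [hV1def, Finset.mem_filter] at hx
      rw [hV2def, Finset.sum_filter]
      refine Finset.sum_congr rfl fun y _ => ?_
      cases hPy : P y with
      | false => rw [if_pos rfl]
      | true => rw [if_neg (by simp)]; exact (hzero x y (hx.2.trans hPy.symm)).symm
    have hcut2 : (∑ x ∈ V1, ∑ y ∈ V2, b x y) = ∑ x ∈ V2, ∑ y, b x y := by
      rw [Finset.sum_comm]
      refine Finset.sum_congr rfl fun y hy => ?_
      simp only [hV2def, Finset.mem_filter] at hy
      have h1 : (∑ x ∈ V1, b x y) = ∑ x ∈ V1, b y x :=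
        Finset.sum_congr rfl fun x _ => hsymm x y
      rw [h1, hV1def, Finset.sum_filter]
      refine Finset.sum_congr rfl fun x _ => ?_
      cases hPx : P x with
      | true => rw [if_pos rfl]
      | false => rw [if_neg (by simp)]; exact (hzero y x (hy.2.trans hPx.symm)).symm
    have hD1 : 0 < ∑ x ∈ V1, ∑ y, b x y :=
      Finset.sum_pos (fun x _ => hiso x) hV1ne
    refine hbar_ub ⟨V1, V2, hV1ne, hV2ne, hdisj, ?_⟩
    rw [hcut1, ← hcut2, hcut1]
    rw [eq_div_iff (by linarith)]
    ring
  have hbar1 : hbar = 1 := le_antisymm hbar_le hbar_ge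
  refine ⟨hlam2, hbar1, ?_, ?_⟩
  · rw [hbar1, hlam2]; norm_num
  · rw [hbar1, hlam2]
    norm_num
end

section
/- For a finite connected weighted graph with no isolated vertices, the largest eigenvalue of the normalized Laplacian equals 2 if and only if the graph is bipartite. -/
/-!
Write `D f = ∑ₓ f(x)² b(x)` and `S f = ∑ₓ ∑ᵧ b(x,y) (f(x) + f(y))²` for the quadratic form of the
signless Laplacian. Symmetry of `b` gives `⟨Lf, f⟩ = 2 D f - S f / 2`, so the Rayleigh quotient is
`2 - S f / (2 D f) ≤ 2`, with equality iff `f(y) = -f(x)` along every edge. On a connected graph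
such an `f ≠ 0` vanishes nowhere, and its sign is a bipartition; conversely the `±1` indicator
of a bipartition attains the value `2`.
-/

open Finset

namespace WeightedGraph

variable {V : Type*}

section Bipartition

variable {r : V → V → Prop}

def signIndicator (P : V → Bool) (v : V) : ℝ :=
  if P v then 1 else -1

theorem signIndicator_ne_zero [Nonempty V] (P : V → Bool) : signIndicator P ≠ 0 :=
  Function.ne_iff.mpr ⟨Classical.arbitrary V, by unfold signIndicator; split <;> norm_num⟩

theorem signIndicator_neg_of_ne {P : V → Bool} {x y : V} (h : P x ≠ P y) :
    signIndicator P y = -signIndicator P x := by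
  unfold signIndicator
  cases hx : P x <;> cases hy : P y <;> simp_all

theorem ne_zero_of_reflTransGen {f : V → ℝ} (hedge : ∀ x y, r x y → f y = -f x) {x y : V}
    (hxy : Relation.ReflTransGen r x y) (hx : f x ≠ 0) : f y ≠ 0 := by
  induction hxy with
  | refl => exact hx
  | tail _ hstep ih => rwa [hedge _ _ hstep, neg_ne_zero]

theorem exists_bipartition_of_forall_neg (hconn : ∀ x y, Relation.ReflTransGen r x y)
    {f : V → ℝ} (hf : f ≠ 0) (hedge : ∀ x y, r x y → f y = -f x) :
    ∃ P : V → Bool, ∀ x y, r x y → P x ≠ P y := by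
  obtain ⟨x₀, hx₀⟩ := Function.ne_iff.mp hf
  refine ⟨fun x => decide (0 < f x), fun x y hxy => ?_⟩
  have hx : f x ≠ 0 := ne_zero_of_reflTransGen hedge (hconn x₀ x) hx₀
  rw [Ne, decide_eq_decide, hedge x y hxy, neg_pos]
  rcases hx.lt_or_gt with h | h <;> simp [h, h.le, not_lt.mpr]

end Bipartition

variable [Fintype V]

noncomputable def rayleighQuotient (b : V → V → ℝ) (f : V → ℝ) : ℝ :=
  (∑ x, (∑ y, (f x - f y) * (b x y / (∑ z, b x z))) * f x * (∑ y, b x y)) /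
    (∑ x, f x ^ 2 * (∑ y, b x y))

def signlessForm {R : Type*} [CommRing R] (b : V → V → R) (f : V → R) : R :=
  ∑ x, ∑ y, b x y * (f x + f y) ^ 2

theorem signlessForm_eq {R : Type*} [CommRing R] {b : V → V → R} (hsymm : ∀ x y, b x y = b y x)
    (f : V → R) :
    signlessForm b f = 2 * ∑ x, ∑ y, b x y * f x ^ 2 + 2 * ∑ x, ∑ y, b x y * f x * f y := by
  have hswap : ∑ x, ∑ y, b x y * f y ^ 2 = ∑ x, ∑ y, b x y * f x ^ 2 := by
    rw [sum_comm]
    simp only [hsymm]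
  have hexpand : ∀ x y, b x y * (f x + f y) ^ 2
      = b x y * f x ^ 2 + b x y * f y ^ 2 + 2 * (b x y * f x * f y) := fun x y => by ring
  simp only [signlessForm, hexpand, sum_add_distrib, ← mul_sum, hswap]
  ring

theorem signlessForm_nonneg {b : V → V → ℝ} (hnn : ∀ x y, 0 ≤ b x y) (f : V → ℝ) :
    0 ≤ signlessForm b f :=
  sum_nonneg fun x _ => sum_nonneg fun y _ => mul_nonneg (hnn x y) (sq_nonneg _)

theorem signlessForm_eq_zero_iff {b : V → V → ℝ} (hnn : ∀ x y, 0 ≤ b x y) (f : V → ℝ) :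
    signlessForm b f = 0 ↔ ∀ x y, 0 < b x y → f y = -f x := by
  have hterm_nonneg : ∀ x y, 0 ≤ b x y * (f x + f y) ^ 2 :=
    fun x y => mul_nonneg (hnn x y) (sq_nonneg _)
  have hterm : ∀ x y, b x y * (f x + f y) ^ 2 = 0 ↔ (0 < b x y → f y = -f x) := by
    intro x y
    rw [mul_eq_zero, pow_eq_zero_iff two_ne_zero, (hnn x y).lt_iff_ne', add_eq_zero_iff_eq_neg',
      or_iff_not_imp_left]
  simp only [signlessForm, ← hterm]
  rw [sum_eq_zero_iff_of_nonneg fun x _ => sum_nonneg fun y _ => hterm_nonneg x y]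
  simp only [sum_eq_zero_iff_of_nonneg fun y _ => hterm_nonneg _ y, mem_univ, true_imp_iff]

theorem sum_sq_mul_degree_pos {b : V → V → ℝ} (hdeg : ∀ x, 0 < ∑ y, b x y) {f : V → ℝ}
    (hf : f ≠ 0) : 0 < ∑ x, f x ^ 2 * ∑ y, b x y := by
  obtain ⟨x₀, hx₀⟩ := Function.ne_iff.mp hf
  exact sum_pos' (fun x _ => mul_nonneg (sq_nonneg _) (hdeg x).le)
    ⟨x₀, mem_univ _, mul_pos (sq_pos_iff.mpr hx₀) (hdeg x₀)⟩

theorem rayleighQuotient_eq_two_sub {b : V → V → ℝ} (hsymm : ∀ x y, b x y = b y x)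
    (hdeg : ∀ x, 0 < ∑ y, b x y) {f : V → ℝ} (hf : f ≠ 0) :
    rayleighQuotient b f = 2 - signlessForm b f / (2 * ∑ x, f x ^ 2 * ∑ y, b x y) := by
  have hnum : ∑ x, (∑ y, (f x - f y) * (b x y / ∑ z, b x z)) * f x * ∑ y, b x y
      = ∑ x, ∑ y, b x y * f x ^ 2 - ∑ x, ∑ y, b x y * f x * f y := by
    rw [← sum_sub_distrib]
    refine sum_congr rfl fun x _ => ?_
    rw [← sum_sub_distrib, sum_mul, sum_mul]
    refine sum_congr rfl fun y _ => ?_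
    field_simp [(hdeg x).ne']
  have hden : ∑ x, f x ^ 2 * ∑ y, b x y = ∑ x, ∑ y, b x y * f x ^ 2 := by
    refine sum_congr rfl fun x _ => ?_
    rw [mul_comm, sum_mul]
  have hpos := sum_sq_mul_degree_pos hdeg hf
  rw [rayleighQuotient, hnum, signlessForm_eq hsymm, ← hden]
  field_simp
  ring

theorem rayleighQuotient_le_two {b : V → V → ℝ} (hsymm : ∀ x y, b x y = b y x)
    (hnn : ∀ x y, 0 ≤ b x y) (hdeg : ∀ x, 0 < ∑ y, b x y) {f : V → ℝ} (hf : f ≠ 0) :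
    rayleighQuotient b f ≤ 2 := by
  rw [rayleighQuotient_eq_two_sub hsymm hdeg hf, sub_le_self_iff]
  exact div_nonneg (signlessForm_nonneg hnn f) (by linarith [sum_sq_mul_degree_pos hdeg hf])

theorem rayleighQuotient_eq_two_iff {b : V → V → ℝ} (hsymm : ∀ x y, b x y = b y x)
    (hnn : ∀ x y, 0 ≤ b x y) (hdeg : ∀ x, 0 < ∑ y, b x y) {f : V → ℝ} (hf : f ≠ 0) :
    rayleighQuotient b f = 2 ↔ ∀ x y, 0 < b x y → f y = -f x := by
  rw [rayleighQuotient_eq_two_sub hsymm hdeg hf, sub_eq_self, div_eq_zero_iff,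
    or_iff_left (by linarith [sum_sq_mul_degree_pos hdeg hf]), signlessForm_eq_zero_iff hnn]

end WeightedGraph

open WeightedGraph in
theorem largest_eigenvalue_eq_two_iff_bipartite_general
    {V : Type*} [Fintype V]
    (b : V → V → ℝ)
    (hsymm : ∀ x y, b x y = b y x)
    (hnn : ∀ x y, 0 ≤ b x y)
    (hiso : ∀ x, 0 < ∑ y, b x y)
    (hconn : ∀ x y : V, Relation.ReflTransGen (fun u v => 0 < b u v) x y)
    (lam : ℝ)
    (hlamMax : IsGreatest {r : ℝ | ∃ f : V → ℝ, f ≠ 0 ∧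
      r = (∑ x, (∑ y, (f x - f y) * (b x y / (∑ z, b x z))) * f x * (∑ y, b x y)) /
        (∑ x, f x ^ 2 * (∑ y, b x y))} lam) :
    lam = 2 ↔ ∃ P : V → Bool, ∀ x y, 0 < b x y → P x ≠ P y := by
  obtain ⟨f, hf, rfl⟩ := hlamMax.1
  constructor
  · intro h
    exact exists_bipartition_of_forall_neg hconn hf
      ((rayleighQuotient_eq_two_iff hsymm hnn hiso hf).mp h)
  · rintro ⟨P, hP⟩
    have : Nonempty V := (Function.ne_iff.mp hf).nonempty
    have hP_max : rayleighQuotient b (signIndicator P) = 2 :=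
      (rayleighQuotient_eq_two_iff hsymm hnn hiso (signIndicator_ne_zero P)).mpr
        fun x y hxy => signIndicator_neg_of_ne (hP x y hxy)
    exact le_antisymm (rayleighQuotient_le_two hsymm hnn hiso hf)
      (hlamMax.2 ⟨signIndicator P, signIndicator_ne_zero P, hP_max.symm⟩)

theorem largest_eigenvalue_eq_two_iff_bipartite
    {V : Type*} [Fintype V] [DecidableEq V]
    (b : V → V → ℝ)
    (hsymm : ∀ x y, b x y = b y x)
    (hnn : ∀ x y, 0 ≤ b x y)
    (hloop : ∀ x, b x x = 0)
    (hiso : ∀ x, 0 < ∑ y, b x y)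
    (hconn : ∀ x y : V, Relation.ReflTransGen (fun u v => 0 < b u v) x y)
    (lam : ℝ)
    (hlamMax : IsGreatest {r : ℝ | ∃ f : V → ℝ, f ≠ 0 ∧
      r = (∑ x, (∑ y, (f x - f y) * (b x y / (∑ z, b x z))) * f x * (∑ y, b x y)) /
        (∑ x, f x ^ 2 * (∑ y, b x y))} lam) :
    lam = 2 ↔ ∃ P : V → Bool, ∀ x y, 0 < b x y → P x ≠ P y :=
  largest_eigenvalue_eq_two_iff_bipartite_general b hsymm hnn hiso hconn lam hlamMax
end

section
/- Let V be a complete graph on N = 2K vertices (K ≥ 1) with a fixed partition V = V1 ∪ V2, |V1| = |V2| = K, with weights b(x,y) = t (0 < t < 1) if x ≠ y lie in the same part and b(x,y) = 1 if they lie in different parts. Then the dual Cheeger constant equals K/(K + (K−1)t), attained on the partition V1 ∪ V2. -/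
/-!
The weights are regular: every vertex has `K - 1` neighbours of weight `t` in its own part and
`K` of weight `1` in the other, so `b(U) = |U| (K + (K - 1) t)` for every `U`. Since off-diagonal
weights are at most `1`, `b(U₁, U₂) ≤ |U₁| |U₂|`, and `4 |U₁| |U₂| ≤ (|U₁| + |U₂|)² ≤ 2K (|U₁| + |U₂|)`
bounds the ratio by `K / (K + (K - 1) t)`. The two parts attain it, as `b(V₁, V₂) = K²`.
-/

open Finset

def dualCheegerRatio {V F : Type*} [Fintype V] [Field F] (b : V → V → F) (U₁ U₂ : Finset V) : F :=
  2 * (∑ x ∈ U₁, ∑ y ∈ U₂, b x y) / ((∑ x ∈ U₁, ∑ y, b x y) + (∑ x ∈ U₂, ∑ y, b x y))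

theorem dualCheegerRatio_of_regular {V F : Type*} [Fintype V] [Field F] {b : V → V → F} {d : F}
    (hdeg : ∀ x, ∑ y, b x y = d) (U₁ U₂ : Finset V) :
    dualCheegerRatio b U₁ U₂ = 2 * (∑ x ∈ U₁, ∑ y ∈ U₂, b x y) / ((#U₁ + #U₂) * d) := by
  simp only [dualCheegerRatio, hdeg, sum_const, nsmul_eq_mul, add_mul]

theorem four_mul_sum_sum_le_card_add_card_sq {V F : Type*} [Field F] [LinearOrder F]
    [IsStrictOrderedRing F] {b : V → V → F} (hb : ∀ x y, x ≠ y → b x y ≤ 1)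
    {U₁ U₂ : Finset V} (hdisj : Disjoint U₁ U₂) :
    4 * ∑ x ∈ U₁, ∑ y ∈ U₂, b x y ≤ ((#U₁ : F) + #U₂) ^ 2 := by
  have hcross : ∑ x ∈ U₁, ∑ y ∈ U₂, b x y ≤ #U₁ * #U₂ := by
    calc ∑ x ∈ U₁, ∑ y ∈ U₂, b x y ≤ ∑ _x ∈ U₁, ∑ _y ∈ U₂, (1 : F) :=
          sum_le_sum fun x hx => sum_le_sum fun y hy =>
            hb x y fun hxy => disjoint_left.mp hdisj hx (hxy ▸ hy)
      _ = #U₁ * #U₂ := by simp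
  nlinarith [sq_nonneg ((#U₁ : F) - #U₂)]

theorem dualCheegerRatio_le_of_regular {V F : Type*} [Fintype V] [Field F] [LinearOrder F]
    [IsStrictOrderedRing F] {b : V → V → F} {d : F} (hd : 0 < d)
    (hdeg : ∀ x, ∑ y, b x y = d) (hb : ∀ x y, x ≠ y → b x y ≤ 1)
    {U₁ U₂ : Finset V} (h₁ : U₁.Nonempty) (hdisj : Disjoint U₁ U₂) :
    dualCheegerRatio b U₁ U₂ ≤ Fintype.card V / (2 * d) := by
  have hn : (0 : F) < #U₁ + #U₂ := by
    have := h₁.card_pos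
    positivity
  have hcard : (#U₁ : F) + #U₂ ≤ Fintype.card V := by
    classical
    rw [← Nat.cast_add, ← card_union_of_disjoint hdisj]
    exact_mod_cast card_le_univ _
  rw [dualCheegerRatio_of_regular hdeg, div_le_div_iff₀ (by positivity) (by positivity)]
  nlinarith [four_mul_sum_sum_le_card_add_card_sq hb hdisj,
    mul_le_mul_of_nonneg_left hcard (mul_nonneg hn.le hd.le)]

theorem card_filter_eq_of_card_eq_two_mul {V : Type*} [Fintype V] {K : ℕ} {P : V → Bool}
    (hcard : Fintype.card V = 2 * K) (hP : #{x | P x = true} = K) (c : Bool) :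
    #{x | P x = c} = K := by
  cases c
  · have := card_filter_add_card_filter_not (s := univ) (fun x => P x = true)
    simp_all only [card_univ, Bool.not_eq_true]
    omega
  · exact hP

theorem sum_weight_eq_of_two_blocks {V F : Type*} [Fintype V] [DecidableEq V] [Field F] {t : F}
    {K : ℕ} {P : V → Bool} {b : V → V → F} (hcard : Fintype.card V = 2 * K)
    (hP : #{x | P x = true} = K)
    (hb : ∀ x y, b x y = if x = y then 0 else if P x = P y then t else 1) (x : V) :
    ∑ y, b x y = K + (K - 1) * t := by
  have hsplit : ∀ y, b x y = (if P y = P x then t else 1) - if x = y then t else 0 := by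
    intro y
    rw [hb]
    split_ifs <;> simp_all
  have hsame := card_filter_eq_of_card_eq_two_mul hcard hP (P x)
  have hother := card_filter_eq_of_card_eq_two_mul hcard hP (!P x)
  simp only [Bool.eq_not] at hother
  rw [sum_congr rfl fun y _ => hsplit y, sum_sub_distrib, sum_ite_eq, if_pos (mem_univ x), sum_ite]
  simp only [sum_const, hsame, hother, nsmul_eq_mul, mul_one]
  ring

theorem sum_sum_cross_blocks {V F : Type*} [Fintype V] [DecidableEq V] [Field F] {t : F}
    {P : V → Bool} {b : V → V → F}
    (hb : ∀ x y, b x y = if x = y then 0 else if P x = P y then t else 1) :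
    ∑ x ∈ {x | P x = true}, ∑ y ∈ {y | P y = false}, b x y =
      #{x | P x = true} * #{y | P y = false} := by
  have hone : ∀ x ∈ ({x | P x = true} : Finset V), ∀ y ∈ ({y | P y = false} : Finset V),
      b x y = 1 := by
    intro x hx y hy
    simp only [mem_filter, mem_univ, true_and] at hx hy
    rw [hb, if_neg (by rintro rfl; simp_all), if_neg (by simp [hx, hy])]
  simp [sum_congr rfl fun x hx => sum_congr rfl (hone x hx)]

theorem complete_bipartite_like_dual_cheeger
    {V : Type*} [Fintype V] [DecidableEq V] {F : Type*} [Field F] [LinearOrder F] [IsStrictOrderedRing F]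
    (t : F) (ht : 0 < t) (ht1 : t < 1)
    (K : ℕ) (hK : 1 ≤ K) (hcard : Fintype.card V = 2 * K)
    (P : V → Bool)
    (hP : (Finset.univ.filter (fun x => P x = true)).card = K)
    (b : V → V → F)
    (hb : ∀ x y, b x y = if x = y then 0 else if P x = P y then t else 1) :
    IsGreatest {r : F | ∃ U1 U2 : Finset V, U1.Nonempty ∧ U2.Nonempty ∧
      Disjoint U1 U2 ∧
      r = 2 * (∑ x ∈ U1, ∑ y ∈ U2, b x y) /
        ((∑ x ∈ U1, ∑ y, b x y) + (∑ x ∈ U2, ∑ y, b x y))}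
      ((K : F) / ((K : F) + ((K : F) - 1) * t)) ∧
    2 * (∑ x ∈ Finset.univ.filter (fun x => P x = true),
          ∑ y ∈ Finset.univ.filter (fun x => P x = false), b x y) /
        ((∑ x ∈ Finset.univ.filter (fun x => P x = true), ∑ y, b x y)
          + (∑ x ∈ Finset.univ.filter (fun x => P x = false), ∑ y, b x y))
      = (K : F) / ((K : F) + ((K : F) - 1) * t) := by
  have hD : 0 < (K : F) + (K - 1) * t := by
    have : (1 : F) ≤ K := by exact_mod_cast hK
    nlinarith
  have hdeg := sum_weight_eq_of_two_blocks hcard hP hb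
  have hfalse := card_filter_eq_of_card_eq_two_mul hcard hP false
  have hratio : dualCheegerRatio b {x | P x = true} {x | P x = false} =
      (K : F) / ((K : F) + ((K : F) - 1) * t) := by
    rw [dualCheegerRatio_of_regular hdeg, sum_sum_cross_blocks hb, hP, hfalse]
    field_simp
    ring
  refine ⟨⟨⟨_, _, ?_, ?_, disjoint_filter.2 fun x _ hx => by simp [hx], hratio.symm⟩, ?_⟩, hratio⟩
  · rw [← card_pos, hP]; omega
  · rw [← card_pos, hfalse]; omega
  · rintro r ⟨U₁, U₂, h₁, -, hdisj, rfl⟩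
    calc dualCheegerRatio b U₁ U₂ ≤ Fintype.card V / (2 * ((K : F) + (K - 1) * t)) :=
          dualCheegerRatio_le_of_regular hD hdeg (fun x y hxy => by
            rw [hb, if_neg hxy]; split_ifs <;> linarith) h₁ hdisj
      _ = K / (K + (K - 1) * t) := by
        rw [hcard]
        field_simp
        push_cast
        ring
end

section
/- For any K ≥ 2 and real t with 0 < t < 1, setting h̄ = K/(K + (K−1)t) and λ = 2K/(K + (K−1)t), one has λ ≤ 1 + √(1 − (1−h̄)²), and the difference (1 + √(1 − (1−h̄)²)) − λ tends to 0 as t → 0. -/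
open Finset

theorem cheeger_eigenvalue_gap_tendsto_zero
    (K : ℕ) (hK : 2 ≤ K) :
    (∀ t : ℝ, 0 < t → t < 1 →
      2 * (K : ℝ) / ((K : ℝ) + ((K : ℝ) - 1) * t)
        ≤ 1 + Real.sqrt (1 - (1 - (K : ℝ) / ((K : ℝ) + ((K : ℝ) - 1) * t)) ^ 2)) ∧
    Filter.Tendsto
      (fun t : ℝ =>
        (1 + Real.sqrt (1 - (1 - (K : ℝ) / ((K : ℝ) + ((K : ℝ) - 1) * t)) ^ 2))
          - 2 * (K : ℝ) / ((K : ℝ) + ((K : ℝ) - 1) * t))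
      (nhdsWithin 0 (Set.Ioo 0 1)) (nhds 0) := by
  have hK1 : (1:ℝ) ≤ (K:ℝ) - 1 := by
    have : (2:ℝ) ≤ (K:ℝ) := by exact_mod_cast hK
    linarith
  constructor
  · intro t ht0 ht1
    set D : ℝ := (K : ℝ) + ((K : ℝ) - 1) * t with hDdef
    have hD : 0 < D := by nlinarith
    set h : ℝ := (K : ℝ) / D with hh
    have h1 : h ≤ 1 := by
      rw [hh, div_le_one hD]; nlinarith
    have h2 : (1:ℝ)/2 ≤ h := by
      rw [hh, div_le_div_iff₀ (by norm_num) hD]; nlinarith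
    have hx : (0:ℝ) ≤ 1 - (1 - h) ^ 2 := by nlinarith
    have key : 2 * h - 1 ≤ Real.sqrt (1 - (1 - h) ^ 2) := by
      rcases le_or_gt (2 * h - 1) 0 with hc | hc
      · exact hc.trans (Real.sqrt_nonneg _)
      · rw [show (2 * h - 1 : ℝ) = Real.sqrt ((2 * h - 1) ^ 2) from
          (Real.sqrt_sq hc.le).symm]
        exact Real.sqrt_le_sqrt (by nlinarith)
    have h2K : 2 * (K:ℝ) / D = 2 * h := by rw [hh, mul_div_assoc]
    rw [h2K]
    linarith
  · have hKne : ((K:ℝ) + ((K:ℝ) - 1) * 0) ≠ 0 := by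
      simp only [mul_zero, add_zero]
      positivity
    have hden : ContinuousAt (fun t : ℝ => (K:ℝ) + ((K:ℝ) - 1) * t) 0 := by fun_prop
    have hfrac : ContinuousAt (fun t : ℝ => (K:ℝ) / ((K:ℝ) + ((K:ℝ) - 1) * t)) 0 :=
      ContinuousAt.div continuousAt_const hden hKne
    have hfrac2 : ContinuousAt (fun t : ℝ => 2 * (K:ℝ) / ((K:ℝ) + ((K:ℝ) - 1) * t)) 0 :=
      ContinuousAt.div continuousAt_const hden hKne
    have hsqrt : ContinuousAt
        (fun t : ℝ => Real.sqrt (1 - (1 - (K:ℝ) / ((K:ℝ) + ((K:ℝ) - 1) * t)) ^ 2)) 0 :=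
      (Real.continuous_sqrt.continuousAt).comp
        ((continuousAt_const.sub hfrac).pow 2 |>.const_sub 1)
    have hc : ContinuousAt
        (fun t : ℝ =>
          (1 + Real.sqrt (1 - (1 - (K:ℝ) / ((K:ℝ) + ((K:ℝ) - 1) * t)) ^ 2))
            - 2 * (K:ℝ) / ((K:ℝ) + ((K:ℝ) - 1) * t)) 0 :=
      (continuousAt_const.add hsqrt).sub hfrac2
    have h0 : (1 + Real.sqrt (1 - (1 - (K:ℝ) / ((K:ℝ) + ((K:ℝ) - 1) * 0)) ^ 2))
        - 2 * (K:ℝ) / ((K:ℝ) + ((K:ℝ) - 1) * 0) = 0 := by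
      have hKne' : (K:ℝ) ≠ 0 := by positivity
      rw [mul_zero, add_zero, div_self hKne', mul_div_assoc, div_self hKne']
      norm_num
    have h := hc.tendsto.mono_left (nhdsWithin_le_nhds (s := Set.Ioo (0:ℝ) 1))
    rwa [h0] at h
end
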